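/- arXiv:2308.13251 — 8 statements merged into one kernel-verified Lean document; each statement's English description precedes it below -/
import Mathlib

section
/- Let A, B, C be a partition of [n] with |A| = |B| = |C| = k, let a ∈ ℤ^n, b ∈ ℤ≥0, assume 3·(a^T·1_{[n]}) = n·b, set w := 3a − b·1_{[n]}, let S := {x ∈ {0,1}^n : 1_A^T·x = 1_B^T·x = 1_C^T·x = 1}, and define d(w) := 1_{[n]} + Σ_{x∈S, w^T·x>0} x. If the numerical 3-dimensional matching instance (A,B,C,a,b) has a solution M, then d(w) is the degree sequence of some partite 3-uniform hypergraph on vertex classes A, B, C; namely the hypergraph whose edges are all e ⊆ [n] with 1_e ∈ M ∪ {x ∈ S : w^T·x > 0} realizes d(w). -/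
open Finset

/-- The characteristic (0/1) vector `1_e ∈ ℤ^n` of a subset `e ⊆ [n]`. -/
def charVec (n : ℕ) (e : Finset (Fin n)) : Fin n → ℤ := fun i => if i ∈ e then 1 else 0

/-- with `w := 3a − b·1`, `S` the set of subsets meeting each of `A,B,C`
exactly once, and `d(w) := 1 + Σ_{x∈S, wᵀx>0} x`: if the numerical 3-dimensional matching
instance `(A,B,C,a,b)` has a solution `M`, then the hypergraph whose edges are all
`e ⊆ [n]` with `1_e ∈ M ∪ {x ∈ S : wᵀx > 0}` is a partite 3-uniform hypergraph on
classes `A,B,C` realizing `d(w)`. -/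
theorem numerical3DM_to_hypergraph (n k : ℕ) (A B C : Finset (Fin n))
    (hAB : Disjoint A B) (hAC : Disjoint A C) (hBC : Disjoint B C)
    (hcover : A ∪ B ∪ C = Finset.univ)
    (hcardA : A.card = k) (hcardB : B.card = k) (hcardC : C.card = k)
    (hn : n = 3 * k)
    (a : Fin n → ℤ) (b : ℤ) (hb : 0 ≤ b)
    (hnec : 3 * ∑ i, a i = (n : ℤ) * b)
    (w : Fin n → ℤ) (hw : w = fun i => 3 * a i - b)
    (S : Finset (Finset (Fin n)))
    (hS : S = Finset.univ.filter
      (fun e => (e ∩ A).card = 1 ∧ (e ∩ B).card = 1 ∧ (e ∩ C).card = 1))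
    (dw : Fin n → ℤ)
    (hdw : dw = fun i =>
      1 + ∑ e ∈ S.filter (fun e => 0 < ∑ j, w j * charVec n e j), charVec n e i)
    (M : Finset (Fin n → ℤ))
    (h01 : ∀ x ∈ M, ∀ i, x i = 0 ∨ x i = 1)
    (hsum : ∑ x ∈ M, x = fun _ => 1)
    (hclass : ∀ x ∈ M, ∑ i ∈ A, x i = 1 ∧ ∑ i ∈ B, x i = 1 ∧ ∑ i ∈ C, x i = 1)
    (hweight : ∀ x ∈ M, ∑ i, a i * x i = b)
    (E : Finset (Finset (Fin n)))
    (hE : E = Finset.univ.filter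
      (fun e => charVec n e ∈ M ∨ (e ∈ S ∧ 0 < ∑ j, w j * charVec n e j))) :
    (∀ e ∈ E, (e ∩ A).card = 1 ∧ (e ∩ B).card = 1 ∧ (e ∩ C).card = 1) ∧
    (∀ i, ((E.filter (fun e => i ∈ e)).card : ℤ) = dw i) := by
  have hsumT : ∀ (T e : Finset (Fin n)), ∑ i ∈ T, charVec n e i = ((e ∩ T).card : ℤ) := by
    intro T e
    simp only [charVec]
    rw [Finset.sum_ite_mem, Finset.sum_const, nsmul_eq_mul, mul_one, Finset.inter_comm]
  have hMpart : ∀ e : Finset (Fin n), charVec n e ∈ M →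
      (e ∩ A).card = 1 ∧ (e ∩ B).card = 1 ∧ (e ∩ C).card = 1 := by
    intro e he
    obtain ⟨h1, h2, h3⟩ := hclass _ he
    rw [hsumT A e] at h1; rw [hsumT B e] at h2; rw [hsumT C e] at h3
    exact ⟨by exact_mod_cast h1, by exact_mod_cast h2, by exact_mod_cast h3⟩
  have hx3 : ∀ x ∈ M, ∑ i, x i = 3 := by
    intro x hx
    obtain ⟨h1, h2, h3⟩ := hclass x hx
    have hu : (Finset.univ : Finset (Fin n)) = A ∪ B ∪ C := hcover.symm
    rw [hu, Finset.sum_union (Finset.disjoint_union_left.mpr ⟨hAC, hBC⟩),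
        Finset.sum_union hAB, h1, h2, h3]
    norm_num
  have hwz : ∀ x ∈ M, ∑ j, w j * x j = 0 := by
    intro x hx
    have h1 : ∑ j, w j * x j = 3 * (∑ j, a j * x j) - b * (∑ j, x j) := by
      rw [hw, Finset.mul_sum, Finset.mul_sum, ← Finset.sum_sub_distrib]
      exact Finset.sum_congr rfl (fun j _ => by ring)
    rw [h1, hweight x hx, hx3 x hx]; ring
  constructor
  · intro e he
    rw [hE, Finset.mem_filter] at he
    rcases he.2 with h | h
    · exact hMpart e h
    · have := h.1
      rw [hS, Finset.mem_filter] at this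
      exact this.2
  · intro i
    have hEi : E.filter (fun e => i ∈ e) =
        (Finset.univ.filter (fun e => charVec n e ∈ M)).filter (fun e => i ∈ e) ∪
        (S.filter (fun e => 0 < ∑ j, w j * charVec n e j)).filter (fun e => i ∈ e) := by
      ext e
      simp only [hE, Finset.mem_filter, Finset.mem_union, Finset.mem_univ, true_and]
      tauto
    have hdisj : Disjoint
        ((Finset.univ.filter (fun e => charVec n e ∈ M)).filter (fun e => i ∈ e))
        ((S.filter (fun e => 0 < ∑ j, w j * charVec n e j)).filter (fun e => i ∈ e)) := by
      rw [Finset.disjoint_left]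
      intro e h1 h2
      simp only [Finset.mem_filter, Finset.mem_univ, true_and] at h1 h2
      have hz := hwz _ h1.1
      linarith [h2.1.2]
    have hbij : ((Finset.univ.filter (fun e => charVec n e ∈ M)).filter
        (fun e => i ∈ e)).card = (M.filter (fun x => x i = 1)).card := by
      apply Finset.card_bij (fun e _ => charVec n e)
      · intro e he
        simp only [Finset.mem_filter, Finset.mem_univ, true_and] at he ⊢
        exact ⟨he.1, by simp [charVec, he.2]⟩
      · intro e1 h1 e2 h2 h
        ext j
        have hj := congrFun h j
        simp only [charVec] at hj
        by_cases hj1 : j ∈ e1 <;> by_cases hj2 : j ∈ e2 <;>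
          simp [hj1, hj2] at hj ⊢
      · intro x hx
        simp only [Finset.mem_filter] at hx
        have hxeq : charVec n (Finset.univ.filter (fun j => x j = 1)) = x := by
          funext j
          simp only [charVec, Finset.mem_filter, Finset.mem_univ, true_and]
          rcases h01 x hx.1 j with h | h <;> simp [h]
        refine ⟨Finset.univ.filter (fun j => x j = 1), ?_, hxeq⟩
        simp only [Finset.mem_filter, Finset.mem_univ, true_and]
        exact ⟨by rw [hxeq]; exact hx.1, by simp [hx.2]⟩
    have h1 : ∑ x ∈ M, x i = 1 := by simpa using congrFun hsum i
    have h2 : ∑ x ∈ M, x i = ((M.filter (fun x => x i = 1)).card : ℤ) := by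
      rw [← Finset.sum_filter_add_sum_filter_not M (fun x => x i = 1)]
      have ha : ∑ x ∈ M.filter (fun x => x i = 1), x i
          = ((M.filter (fun x => x i = 1)).card : ℤ) := by
        rw [Finset.sum_congr rfl (fun x hx => (Finset.mem_filter.mp hx).2),
          Finset.sum_const, nsmul_eq_mul, mul_one]
      have hb2 : ∑ x ∈ M.filter (fun x => ¬ x i = 1), x i = 0 := by
        apply Finset.sum_eq_zero
        intro x hx
        rcases h01 x (Finset.mem_filter.mp hx).1 i with h | h
        · exact h
        · exact absurd h (Finset.mem_filter.mp hx).2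
      rw [ha, hb2, add_zero]
    have hMcard : (((Finset.univ.filter (fun e => charVec n e ∈ M)).filter
        (fun e => i ∈ e)).card : ℤ) = 1 := by
      rw [hbij, ← h2, h1]
    have hSp : ∑ e ∈ S.filter (fun e => 0 < ∑ j, w j * charVec n e j), charVec n e i
        = ((((S.filter (fun e => 0 < ∑ j, w j * charVec n e j)).filter
          (fun e => i ∈ e)).card : ℤ)) := by
      simp only [charVec]
      rw [Finset.sum_boole]
    rw [hEi, Finset.card_union_of_disjoint hdisj, hdw]
    simp only []
    rw [Nat.cast_add, hMcard, hSp]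
end

section
/- Let A, B, C be a partition of [n] with |A| = |B| = |C| = k, let a ∈ ℤ^n, b ∈ ℤ≥0, assume 3·(a^T·1_{[n]}) = n·b, set w := 3a − b·1_{[n]}, let S := {x ∈ {0,1}^n : 1_A^T·x = 1_B^T·x = 1_C^T·x = 1}, and define d(w) := 1_{[n]} + Σ_{x∈S, w^T·x>0} x. If H is a partite 3-uniform hypergraph on vertex classes A, B, C whose degree sequence is d(w), then M(H) := {1_e : e ∈ E(H), w^T·1_e = 0} is a solution to the numerical 3-dimensional matching instance (A,B,C,a,b): Σ_{x∈M(H)} x = 1_{[n]}, every x ∈ M(H) satisfies 1_A^T·x = 1_B^T·x = 1_C^T·x = 1, and every x ∈ M(H) satisfies a^T·x = b. -/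
open Finset

lemma charVec_sum_over {n : ℕ} (e : Finset (Fin n)) (T : Finset (Fin n)) :
    ∑ i ∈ T, charVec n e i = ((e ∩ T).card : ℤ) := by
  simp only [charVec]
  rw [Finset.sum_boole, Finset.filter_mem_eq_inter, Finset.inter_comm]

lemma charVec_deg {n : ℕ} (T : Finset (Finset (Fin n))) (i : Fin n) :
    ∑ e ∈ T, charVec n e i = ((T.filter (fun e => i ∈ e)).card : ℤ) := by
  simp only [charVec]
  rw [Finset.sum_boole]

/-- with `w := 3a − b·1`, `S` the set of subsets meeting each of `A,B,C`
exactly once, and `d(w) := 1 + Σ_{x∈S, wᵀx>0} x`: if `H` is a partite 3-uniform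
hypergraph on classes `A,B,C` whose degree sequence is `d(w)`, then
`M(H) := {1_e : e ∈ E(H), wᵀ·1_e = 0}` is a solution to the numerical 3-dimensional
matching instance `(A,B,C,a,b)`. -/
theorem hypergraph_to_numerical3DM (n k : ℕ) (A B C : Finset (Fin n))
    (hAB : Disjoint A B) (hAC : Disjoint A C) (hBC : Disjoint B C)
    (hcover : A ∪ B ∪ C = Finset.univ)
    (hcardA : A.card = k) (hcardB : B.card = k) (hcardC : C.card = k)
    (hn : n = 3 * k)
    (a : Fin n → ℤ) (b : ℤ) (hb : 0 ≤ b)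
    (hnec : 3 * ∑ i, a i = (n : ℤ) * b)
    (w : Fin n → ℤ) (hw : w = fun i => 3 * a i - b)
    (S : Finset (Finset (Fin n)))
    (hS : S = Finset.univ.filter
      (fun e => (e ∩ A).card = 1 ∧ (e ∩ B).card = 1 ∧ (e ∩ C).card = 1))
    (dw : Fin n → ℤ)
    (hdw : dw = fun i =>
      1 + ∑ e ∈ S.filter (fun e => 0 < ∑ j, w j * charVec n e j), charVec n e i)
    (E : Finset (Finset (Fin n)))
    (hpartite : ∀ e ∈ E, (e ∩ A).card = 1 ∧ (e ∩ B).card = 1 ∧ (e ∩ C).card = 1)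
    (hdeg : ∀ i, ((E.filter (fun e => i ∈ e)).card : ℤ) = dw i)
    (MH : Finset (Fin n → ℤ))
    (hMH : MH = (E.filter (fun e => ∑ j, w j * charVec n e j = 0)).image (charVec n)) :
    (∑ x ∈ MH, x = fun _ => 1) ∧
    (∀ x ∈ MH, ∑ i ∈ A, x i = 1 ∧ ∑ i ∈ B, x i = 1 ∧ ∑ i ∈ C, x i = 1) ∧
    (∀ x ∈ MH, ∑ i, a i * x i = b) := by
  have hES : E ⊆ S := by
    intro e he
    rw [hS, mem_filter]
    exact ⟨mem_univ e, hpartite e he⟩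
  have hwsum : ∑ j, w j = 0 := by
    rw [hw]
    have : ∑ j : Fin n, (3 * a j - b) = 3 * ∑ j, a j - (n : ℤ) * b := by
      rw [Finset.sum_sub_distrib, ← Finset.mul_sum, Finset.sum_const, Finset.card_univ,
        Fintype.card_fin, nsmul_eq_mul]
    rw [this, hnec]; ring
  have hsumdeg : ∀ (T : Finset (Finset (Fin n))),
      ∑ e ∈ T, ∑ j, w j * charVec n e j = ∑ j, w j * ∑ e ∈ T, charVec n e j := by
    intro T
    rw [Finset.sum_comm]
    exact Finset.sum_congr rfl fun j _ => (Finset.mul_sum _ _ _).symm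
  set Sp := S.filter (fun e => 0 < ∑ j, w j * charVec n e j) with hSp
  set P := E.filter (fun e => 0 < ∑ j, w j * charVec n e j) with hP
  set N := E.filter (fun e => ¬ 0 < ∑ j, w j * charVec n e j) with hN
  have hstar : ∑ e ∈ E, ∑ j, w j * charVec n e j = ∑ e ∈ Sp, ∑ j, w j * charVec n e j := by
    rw [hsumdeg E, hsumdeg Sp]
    have hdegE : ∀ j, (∑ e ∈ E, charVec n e j) = 1 + ∑ e ∈ Sp, charVec n e j := by
      intro j
      rw [charVec_deg, hdeg j]
      simp only [hdw]
    calc ∑ j, w j * ∑ e ∈ E, charVec n e j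
        = ∑ j, (w j + w j * ∑ e ∈ Sp, charVec n e j) := by
          refine Finset.sum_congr rfl fun j _ => ?_
          rw [hdegE j]; ring
      _ = (∑ j, w j) + ∑ j, w j * ∑ e ∈ Sp, charVec n e j := Finset.sum_add_distrib
      _ = ∑ j, w j * ∑ e ∈ Sp, charVec n e j := by rw [hwsum]; ring
  have hsplit : ∑ e ∈ P, (∑ j, w j * charVec n e j) + ∑ e ∈ N, (∑ j, w j * charVec n e j)
      = ∑ e ∈ E, ∑ j, w j * charVec n e j :=
    Finset.sum_filter_add_sum_filter_not E _ _
  have hPsub : P ⊆ Sp := by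
    intro e he
    rw [hP, mem_filter] at he
    rw [hSp, mem_filter]
    exact ⟨hES he.1, he.2⟩
  have h1 : ∑ e ∈ P, (∑ j, w j * charVec n e j) ≤ ∑ e ∈ Sp, (∑ j, w j * charVec n e j) := by
    apply Finset.sum_le_sum_of_subset_of_nonneg hPsub
    intro x hx _
    rw [hSp, mem_filter] at hx
    exact le_of_lt hx.2
  have h2 : ∀ e ∈ N, (∑ j, w j * charVec n e j) ≤ 0 := by
    intro e he
    rw [hN, mem_filter] at he
    exact le_of_not_gt he.2
  have hN0 : ∑ e ∈ N, (∑ j, w j * charVec n e j) = 0 := by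
    have hle := Finset.sum_nonpos h2
    linarith [hsplit, hstar, h1, hle]
  have hNall : ∀ e ∈ N, (∑ j, w j * charVec n e j) = 0 :=
    (Finset.sum_eq_zero_iff_of_nonpos h2).mp hN0
  have hSpP : Sp = P := by
    apply Finset.Subset.antisymm _ hPsub
    by_contra hsub
    obtain ⟨x, hxSp, hxP⟩ := Finset.not_subset.mp hsub
    have hpos : 0 < ∑ e ∈ Sp \ P, ∑ j, w j * charVec n e j := by
      apply Finset.sum_pos
      · intro e he
        have := (Finset.mem_sdiff.mp he).1
        rw [hSp, mem_filter] at this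
        exact this.2
      · exact ⟨x, Finset.mem_sdiff.mpr ⟨hxSp, hxP⟩⟩
    have hdiff : ∑ e ∈ Sp \ P, (∑ j, w j * charVec n e j)
        = ∑ e ∈ Sp, (∑ j, w j * charVec n e j) - ∑ e ∈ P, (∑ j, w j * charVec n e j) :=
      Finset.sum_sdiff_eq_sub hPsub
    linarith [hstar, hsplit, hN0]
  have hdegN : ∀ i, ∑ e ∈ N, charVec n e i = 1 := by
    intro i
    have hsplit2 : ∑ e ∈ P, charVec n e i + ∑ e ∈ N, charVec n e i
        = ∑ e ∈ E, charVec n e i :=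
      Finset.sum_filter_add_sum_filter_not E _ _
    have hE : ∑ e ∈ E, charVec n e i = 1 + ∑ e ∈ Sp, charVec n e i := by
      rw [charVec_deg, hdeg i]
      simp only [hdw]
    rw [hSpP] at hE
    linarith [hsplit2, hE]
  have hE0 : E.filter (fun e => ∑ j, w j * charVec n e j = 0) = N := by
    rw [hN]
    ext e
    simp only [mem_filter]
    constructor
    · rintro ⟨he, h0⟩
      exact ⟨he, by rw [h0]; exact lt_irrefl 0⟩
    · rintro ⟨he, hnpos⟩
      exact ⟨he, hNall e (by rw [hN, mem_filter]; exact ⟨he, hnpos⟩)⟩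
  have hmem : ∀ x ∈ MH, ∃ e ∈ E, (∑ j, w j * charVec n e j = 0) ∧ x = charVec n e := by
    intro x hx
    rw [hMH, Finset.mem_image] at hx
    obtain ⟨e, he, rfl⟩ := hx
    rw [mem_filter] at he
    exact ⟨e, he.1, he.2, rfl⟩
  refine ⟨?_, ?_, ?_⟩
  · -- sum of MH is all-ones
    have hinj : ∀ x ∈ E.filter (fun e => ∑ j, w j * charVec n e j = 0),
        ∀ y ∈ E.filter (fun e => ∑ j, w j * charVec n e j = 0),
        charVec n x = charVec n y → x = y := by
      intro x _ y _ h
      ext i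
      have hi := congrFun h i
      simp only [charVec] at hi
      by_cases hx : i ∈ x <;> by_cases hy : i ∈ y <;> simp [hx, hy] at hi ⊢
    rw [hMH, Finset.sum_image hinj]
    funext i
    have : (∑ e ∈ E.filter (fun e => ∑ j, w j * charVec n e j = 0), charVec n e) i
        = ∑ e ∈ E.filter (fun e => ∑ j, w j * charVec n e j = 0), charVec n e i :=
      Finset.sum_apply i _ _
    rw [this, hE0]
    exact hdegN i
  · intro x hx
    obtain ⟨e, heE, _, rfl⟩ := hmem x hx
    obtain ⟨hA, hB, hC⟩ := hpartite e heE
    refine ⟨?_, ?_, ?_⟩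
    · rw [charVec_sum_over, hA]; norm_num
    · rw [charVec_sum_over, hB]; norm_num
    · rw [charVec_sum_over, hC]; norm_num
  · intro x hx
    obtain ⟨e, heE, hzero, rfl⟩ := hmem x hx
    obtain ⟨hA, hB, hC⟩ := hpartite e heE
    have hsum3 : ∑ i, charVec n e i = 3 := by
      have hu : (univ : Finset (Fin n)) = A ∪ B ∪ C := hcover.symm
      rw [hu, Finset.sum_union (by rw [Finset.disjoint_union_left]; exact ⟨hAC, hBC⟩),
        Finset.sum_union hAB, charVec_sum_over, charVec_sum_over, charVec_sum_over,
        hA, hB, hC]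
      norm_num
    have hws : ∑ j, w j * charVec n e j
        = 3 * (∑ i, a i * charVec n e i) - b * ∑ i, charVec n e i := by
      rw [hw]
      simp only [sub_mul]
      rw [Finset.sum_sub_distrib, ← Finset.mul_sum]
      congr 1
      rw [Finset.mul_sum]
      exact Finset.sum_congr rfl fun j _ => by ring
    rw [hws, hsum3] at hzero
    linarith
end

section
/- Let D = (D_A, D_B, D_C) be a prescribed degree sequence for a partite 3-uniform hypergraph on vertex classes A (of size n₁), B (of size n₂), C. Then D is graphic if and only if there exists a graphic bipartite degree sequence D̄ = (D_{A×B}, D_C) on vertex classes A×B and C such that: for every i, Σ_{j=1}^{n₂} d((a_i,b_j)) = d(a_i) (the degree of a_i in D); for every j, Σ_{i=1}^{n₁} d((a_i,b_j)) = d(b_j) (the degree of b_j in D); and the C-part of D̄ equals D_C. -/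
open Finset

variable {A B C : Type*} [Fintype A] [Fintype B] [Fintype C]
  [DecidableEq A] [DecidableEq B] [DecidableEq C]

/-- Degree of a vertex `a ∈ A` in a partite 3-uniform hypergraph with edge set `E`. -/
def hDegA (E : Finset (A × B × C)) (a : A) : ℕ := (E.filter fun e => e.1 = a).card

/-- Degree of a vertex `b ∈ B`. -/
def hDegB (E : Finset (A × B × C)) (b : B) : ℕ := (E.filter fun e => e.2.1 = b).card

/-- Degree of a vertex `c ∈ C`. -/
def hDegC (E : Finset (A × B × C)) (c : C) : ℕ := (E.filter fun e => e.2.2 = c).card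

/-!
The (A,B)-shadow is the edge set read through the reassociation `A × B × C ≃ (A × B) × C`,
hence a bijection between edge sets. It keeps the degrees in `C` and gives the pair `(a, b)`
its codegree, whose row and column sums are the degrees of `a` and `b`, since every edge
through `a` passes through exactly one pair `(a, b)`.
-/

def hCodegAB (E : Finset (A × B × C)) (p : A × B) : ℕ :=
  (E.filter fun e => (e.1, e.2.1) = p).card

omit [Fintype A] [Fintype C] [DecidableEq C] in
theorem sum_hCodegAB_left (E : Finset (A × B × C)) (a : A) :
    ∑ b, hCodegAB E (a, b) = hDegA E a := by
  rw [hDegA, card_eq_sum_card_fiberwise (f := fun e => e.2.1) (t := univ)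
    fun _ _ => mem_univ _]
  refine sum_congr rfl fun b _ => ?_
  rw [hCodegAB, filter_filter]
  simp only [Prod.mk.injEq]

omit [Fintype B] [Fintype C] [DecidableEq C] in
theorem sum_hCodegAB_right (E : Finset (A × B × C)) (b : B) :
    ∑ a, hCodegAB E (a, b) = hDegB E b := by
  rw [hDegB, card_eq_sum_card_fiberwise (f := fun e => e.1) (t := univ)
    fun _ _ => mem_univ _]
  refine sum_congr rfl fun a _ => ?_
  rw [hCodegAB, filter_filter]
  simp only [Prod.mk.injEq, and_comm]

def shadowAB : Finset (A × B × C) ≃ Finset ((A × B) × C) :=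
  (Equiv.prodAssoc A B C).symm.finsetCongr

omit [Fintype A] [Fintype B] [Fintype C] [DecidableEq C] in
theorem card_filter_shadowAB_fst (E : Finset (A × B × C)) (p : A × B) :
    ((shadowAB E).filter fun e => e.1 = p).card = hCodegAB E p := by
  rw [shadowAB, Equiv.finsetCongr_apply, filter_map, card_map]
  rfl

omit [Fintype A] [Fintype B] [Fintype C] [DecidableEq A] [DecidableEq B] in
theorem card_filter_shadowAB_snd (E : Finset (A × B × C)) (c : C) :
    ((shadowAB E).filter fun e => e.2 = c).card = hDegC E c := by
  rw [shadowAB, Equiv.finsetCongr_apply, filter_map, card_map]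
  rfl

/-- `D = (D_A, D_B, D_C)` is graphic as a partite 3-uniform hypergraph
degree sequence iff there is a graphic bipartite degree sequence `(D_{A×B}, D_C)` on
vertex classes `A×B` and `C` whose `A×B`-part has row sums `D_A`, column sums `D_B`,
and whose `C`-part equals `D_C`. -/
theorem shadow_characterization (dA : A → ℕ) (dB : B → ℕ) (dC : C → ℕ) :
    (∃ E : Finset (A × B × C),
        (∀ a, hDegA E a = dA a) ∧ (∀ b, hDegB E b = dB b) ∧ (∀ c, hDegC E c = dC c))
    ↔
    (∃ dAB : A × B → ℕ,
        (∃ F : Finset ((A × B) × C),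
            (∀ p : A × B, (F.filter fun e => e.1 = p).card = dAB p) ∧
            (∀ c : C, (F.filter fun e => e.2 = c).card = dC c)) ∧
        (∀ a : A, ∑ b : B, dAB (a, b) = dA a) ∧
        (∀ b : B, ∑ a : A, dAB (a, b) = dB b)) := by
  constructor
  · rintro ⟨E, hA, hB, hC⟩
    exact ⟨hCodegAB E,
      ⟨shadowAB E, card_filter_shadowAB_fst E,
        fun c => (card_filter_shadowAB_snd E c).trans (hC c)⟩,
      fun a => (sum_hCodegAB_left E a).trans (hA a),
      fun b => (sum_hCodegAB_right E b).trans (hB b)⟩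
  · rintro ⟨dAB, ⟨F, hAB, hC⟩, hA, hB⟩
    obtain ⟨E, rfl⟩ := shadowAB.surjective F
    obtain rfl : hCodegAB E = dAB :=
      funext fun p => (card_filter_shadowAB_fst E p).symm.trans (hAB p)
    exact ⟨E, fun a => (sum_hCodegAB_left E a).symm.trans (hA a),
      fun b => (sum_hCodegAB_right E b).symm.trans (hB b),
      fun c => (card_filter_shadowAB_snd E c).symm.trans (hC c)⟩
end

section
/- Let D = (D_A, D_B, D_C) be a third almost-regular degree sequence for partite 3-uniform hypergraphs on vertex classes A, B, C. If D has a realization H, then D also has a realization H′ whose (A,B)-projection is B-balanced, and moreover H′ can be obtained from H by a finite series of switch operations. -/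
open Finset

variable {A B C : Type*} [Fintype A] [Fintype B] [Fintype C]
  [DecidableEq A] [DecidableEq B] [DecidableEq C]

/-- Multiplicity of the pair `(a,b)` in the `(A,B)`-projection of the hypergraph `E`,
i.e. the number of `c ∈ C` with `(a,b,c) ∈ E`. -/
def projAB (E : Finset (A × B × C)) (a : A) (b : B) : ℕ :=
  (E.filter fun e => e.1 = a ∧ e.2.1 = b).card

/-- The `(A,B)`-projection of `E` is `B`-balanced: for every `b ∈ B` there is an `l`
such that every `a ∈ A` has either `l` or `l−1` parallel edges to `b`. -/
def BBalanced (E : Finset (A × B × C)) : Prop :=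
  ∀ b : B, ∃ l : ℕ, ∀ a : A, projAB E a b = l ∨ projAB E a b + 1 = l

/-- A single switch operation (in any one of the three vertex classes): two hyperedges
are removed and two new hyperedges (not previously present) obtained by exchanging
their coordinates in one fixed class are added. -/
def IsSwitch (E E' : Finset (A × B × C)) : Prop :=
  (∃ a₁ a₂ b₁ c₁ b₂ c₂, (a₁, b₁, c₁) ∈ E ∧ (a₂, b₂, c₂) ∈ E ∧
    (a₂, b₁, c₁) ∉ E ∧ (a₁, b₂, c₂) ∉ E ∧
    E' = insert (a₂, b₁, c₁) (insert (a₁, b₂, c₂)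
      ((E.erase (a₁, b₁, c₁)).erase (a₂, b₂, c₂)))) ∨
  (∃ b₁ b₂ a₁ c₁ a₂ c₂, (a₁, b₁, c₁) ∈ E ∧ (a₂, b₂, c₂) ∈ E ∧
    (a₁, b₂, c₁) ∉ E ∧ (a₂, b₁, c₂) ∉ E ∧
    E' = insert (a₁, b₂, c₁) (insert (a₂, b₁, c₂)
      ((E.erase (a₁, b₁, c₁)).erase (a₂, b₂, c₂)))) ∨
  (∃ c₁ c₂ a₁ b₁ a₂ b₂, (a₁, b₁, c₁) ∈ E ∧ (a₂, b₂, c₂) ∈ E ∧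
    (a₁, b₁, c₂) ∉ E ∧ (a₂, b₂, c₁) ∉ E ∧
    E' = insert (a₁, b₁, c₂) (insert (a₂, b₂, c₁)
      ((E.erase (a₁, b₁, c₁)).erase (a₂, b₂, c₂))))

/-! The potential `∑ a, ∑ b, projAB E a b ^ 2` drops under a suitable switch as long as the
projection is not `B`-balanced. If `projAB E a₂ b₁ + 2 ≤ projAB E a₁ b₁`, then, as the degrees
of `a₁` and `a₂` differ by at most one, some `b₂` has `projAB E a₁ b₂ < projAB E a₂ b₂`. Pick
`(a₁, b₁, c₁) ∈ E` with `(a₂, b₁, c₁) ∉ E` and `(a₂, b₂, c₂) ∈ E` with `(a₁, b₂, c₂) ∉ E`;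
exchanging `a₁` and `a₂` in these two edges moves one unit of the projection around the rectangle
`{a₁, a₂} × {b₁, b₂}`, from the two heavy entries to the two light ones, and lowers the potential
by at least `2`. Switches preserve all degrees, so the degrees of `A` stay almost regular
throughout. -/

section Exchange

variable {X : Type*} [DecidableEq X]

def replacePair (E : Finset X) (e₁ e₂ p q : X) : Finset X :=
  insert p (insert q ((E.erase e₁).erase e₂))

variable {E : Finset X} {e₁ e₂ p q : X}

theorem sum_replacePair_add {M : Type*} [AddCommMonoid M] (he₁ : e₁ ∈ E) (he₂ : e₂ ∈ E)
    (hp : p ∉ E) (hq : q ∉ E) (he : e₁ ≠ e₂) (hpq : p ≠ q) (f : X → M) :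
    ∑ x ∈ replacePair E e₁ e₂ p q, f x + f e₁ + f e₂ = ∑ x ∈ E, f x + f p + f q := by
  have hq' : q ∉ (E.erase e₁).erase e₂ := fun h => hq (mem_of_mem_erase (mem_of_mem_erase h))
  have hp' : p ∉ insert q ((E.erase e₁).erase e₂) := by
    rw [mem_insert, not_or]
    exact ⟨hpq, fun h => hp (mem_of_mem_erase (mem_of_mem_erase h))⟩
  rw [replacePair, sum_insert hp', sum_insert hq', ← sum_erase_add E f he₁,
    ← sum_erase_add (E.erase e₁) f (mem_erase.2 ⟨he.symm, he₂⟩)]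
  abel

theorem sum_replacePair_eq {M : Type*} [AddCancelCommMonoid M] (he₁ : e₁ ∈ E) (he₂ : e₂ ∈ E)
    (hp : p ∉ E) (hq : q ∉ E) (he : e₁ ≠ e₂) (hpq : p ≠ q) {f : X → M}
    (hf : f e₁ + f e₂ = f p + f q) :
    ∑ x ∈ replacePair E e₁ e₂ p q, f x = ∑ x ∈ E, f x := by
  simpa only [add_assoc, hf, add_left_inj] using sum_replacePair_add he₁ he₂ hp hq he hpq f

end Exchange

theorem exists_lt_of_sum_le_sum_add_one {ι : Type*} [Fintype ι] [DecidableEq ι] {f g : ι → ℕ}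
    {i : ι} (hsum : ∑ x, f x ≤ ∑ x, g x + 1) (hi : g i + 2 ≤ f i) : ∃ j, f j < g j := by
  by_contra! hgf
  have : ∑ x, (g x + if x = i then 1 else 0) < ∑ x, f x :=
    sum_lt_sum (fun x _ => by split_ifs with hx <;> [(subst hx; omega); simpa using hgf x])
      ⟨i, mem_univ i, by rw [if_pos rfl]; omega⟩
  simp only [sum_add_distrib, sum_ite_eq', mem_univ, if_true] at this
  omega

theorem sum_sum_sq_lt_of_exchange {α β : Type*} [Fintype α] [Fintype β] [DecidableEq α]
    [DecidableEq β] {f g : α → β → ℕ} {a₁ a₂ : α} {b₁ b₂ : β} (ha : a₁ ≠ a₂) (hb : b₁ ≠ b₂)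
    (hg : ∀ a b, g a b + (if a₁ = a ∧ b₁ = b then 1 else 0) + (if a₂ = a ∧ b₂ = b then 1 else 0)
      = f a b + (if a₂ = a ∧ b₁ = b then 1 else 0) + (if a₁ = a ∧ b₂ = b then 1 else 0))
    (hlt : f a₂ b₁ + f a₁ b₂ + 2 < f a₁ b₁ + f a₂ b₂) :
    ∑ a, ∑ b, g a b ^ 2 < ∑ a, ∑ b, f a b ^ 2 := by
  let S : Finset (α × β) := {(a₁, b₁), (a₂, b₂), (a₂, b₁), (a₁, b₂)}
  have hout : ∀ x ∈ Sᶜ, g x.1 x.2 ^ 2 = f x.1 x.2 ^ 2 := by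
    rintro ⟨a, b⟩ hx
    have := hg a b
    simp only [S, mem_compl, mem_insert, mem_singleton, Prod.mk.injEq, not_or] at hx
    grind
  have h₁ := hg a₁ b₁
  have h₂ := hg a₂ b₂
  have h₃ := hg a₂ b₁
  have h₄ := hg a₁ b₂
  simp only [ha, ha.symm, hb, hb.symm, and_self, and_true, and_false,
    if_true, if_false] at h₁ h₂ h₃ h₄
  rw [← Fintype.sum_prod_type', ← Fintype.sum_prod_type', ← sum_add_sum_compl S,
    ← sum_add_sum_compl S (fun x => f x.1 x.2 ^ 2), sum_congr rfl hout]
  simp only [S, mem_insert, mem_singleton, Prod.mk.injEq, ha, ha.symm, hb, hb.symm, and_self,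
    and_true, and_false, or_self, not_false_eq_true, sum_insert, sum_singleton, compl_insert,
    add_lt_add_iff_right]
  nlinarith

omit [Fintype A] [Fintype B] in
theorem projAB_eq_card (E : Finset (A × B × C)) (a : A) (b : B) :
    projAB E a b = #{c | (a, b, c) ∈ E} :=
  card_nbij' (fun e => e.2.2) (fun c => (a, b, c)) (fun e he => by grind [projAB])
    (fun c hc => by simp_all) (fun e he => by grind) (fun c _ => rfl)

omit [Fintype A] [Fintype B] in
theorem exists_mem_notMem_of_projAB_lt {E : Finset (A × B × C)} {a a' : A} {b b' : B}
    (h : projAB E a' b' < projAB E a b) : ∃ c, (a, b, c) ∈ E ∧ (a', b', c) ∉ E := by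
  rw [projAB_eq_card, projAB_eq_card] at h
  obtain ⟨c, hc, hc'⟩ := exists_mem_notMem_of_card_lt_card h
  exact ⟨c, (mem_filter.1 hc).2, fun h => hc' (mem_filter.2 ⟨mem_univ c, h⟩)⟩

omit [Fintype A] [Fintype C] [DecidableEq C] in
theorem sum_projAB (E : Finset (A × B × C)) (a : A) : ∑ b, projAB E a b = hDegA E a := by
  simp only [projAB, hDegA, card_filter]
  rw [sum_comm]
  simp [ite_and]

omit [Fintype B] [Fintype C] [DecidableEq C] in
theorem exists_projAB_add_two_le_of_not_bBalanced {E : Finset (A × B × C)} (hE : ¬BBalanced E) :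
    ∃ b a₁ a₂, projAB E a₂ b + 2 ≤ projAB E a₁ b := by
  simp only [BBalanced, not_forall, not_exists, not_or] at hE
  obtain ⟨b, hb⟩ := hE
  obtain ⟨a₀, -⟩ := hb 0
  obtain ⟨a₁, -, hmax⟩ := exists_max_image univ (projAB E · b) ⟨a₀, mem_univ a₀⟩
  obtain ⟨a₂, h₂, h₂'⟩ := hb (projAB E a₁ b)
  exact ⟨b, a₁, a₂, by have := hmax a₂ (mem_univ a₂); omega⟩

omit [Fintype A] [Fintype B] [Fintype C] in
theorem IsSwitch.hDeg_eq {E E' : Finset (A × B × C)} (h : IsSwitch E E') :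
    hDegA E' = hDegA E ∧ hDegB E' = hDegB E ∧ hDegC E' = hDegC E := by
  rcases h with ⟨_, _, _, _, _, _, h₁, h₂, hp, hq, rfl⟩ | ⟨_, _, _, _, _, _, h₁, h₂, hp, hq, rfl⟩ |
    ⟨_, _, _, _, _, _, h₁, h₂, hp, hq, rfl⟩ <;>
  refine ⟨funext fun _ => ?_, funext fun _ => ?_, funext fun _ => ?_⟩ <;>
  simp only [hDegA, hDegB, hDegC, card_filter] <;>
  refine sum_replacePair_eq (E := E) h₁ h₂ hp hq ?_ ?_ ?_ <;>
  -- coinciding old (or new) edges would force the new edge `p` to be an old one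
  first | rfl | exact add_comm _ _ | (rintro ⟨⟩; contradiction)

omit [Fintype A] [Fintype B] [Fintype C] in
theorem hDeg_eq_of_reflTransGen_isSwitch {E E' : Finset (A × B × C)}
    (h : Relation.ReflTransGen IsSwitch E E') :
    hDegA E' = hDegA E ∧ hDegB E' = hDegB E ∧ hDegC E' = hDegC E := by
  induction h with
  | refl => exact ⟨rfl, rfl, rfl⟩
  | tail _ hs ih =>
    obtain ⟨hA, hB, hC⟩ := hs.hDeg_eq
    exact ⟨hA.trans ih.1, hB.trans ih.2.1, hC.trans ih.2.2⟩

def projPotential (E : Finset (A × B × C)) : ℕ := ∑ a, ∑ b, projAB E a b ^ 2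

theorem exists_isSwitch_projPotential_lt {E : Finset (A × B × C)} {k : ℕ}
    (hreg : ∀ a, hDegA E a = k ∨ hDegA E a + 1 = k) (hE : ¬BBalanced E) :
    ∃ E', IsSwitch E E' ∧ projPotential E' < projPotential E := by
  obtain ⟨b₁, a₁, a₂, hgap⟩ := exists_projAB_add_two_le_of_not_bBalanced hE
  obtain ⟨b₂, hb₂⟩ : ∃ b₂, projAB E a₁ b₂ < projAB E a₂ b₂ := by
    refine exists_lt_of_sum_le_sum_add_one ?_ hgap
    rw [sum_projAB, sum_projAB]
    rcases hreg a₁ with h₁ | h₁ <;> rcases hreg a₂ with h₂ | h₂ <;> omega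
  have ha : a₁ ≠ a₂ := by rintro rfl; omega
  have hb : b₁ ≠ b₂ := by rintro rfl; omega
  obtain ⟨c₁, h₁, hp⟩ :=
    exists_mem_notMem_of_projAB_lt (by omega : projAB E a₂ b₁ < projAB E a₁ b₁)
  obtain ⟨c₂, h₂, hq⟩ := exists_mem_notMem_of_projAB_lt hb₂
  refine ⟨replacePair E (a₁, b₁, c₁) (a₂, b₂, c₂) (a₂, b₁, c₁) (a₁, b₂, c₂),
    Or.inl ⟨_, _, _, _, _, _, h₁, h₂, hp, hq, rfl⟩, ?_⟩
  refine sum_sum_sq_lt_of_exchange ha hb (fun a b => ?_) (by omega)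
  simp only [projAB, card_filter]
  exact sum_replacePair_add h₁ h₂ hp hq (by simp [ha]) (by simp [ha.symm]) _

theorem exists_reflTransGen_isSwitch_bBalanced {k : ℕ} (E : Finset (A × B × C))
    (hreg : ∀ a, hDegA E a = k ∨ hDegA E a + 1 = k) :
    ∃ E', Relation.ReflTransGen IsSwitch E E' ∧ BBalanced E' := by
  by_cases hE : BBalanced E
  · exact ⟨E, .refl, hE⟩
  obtain ⟨E', hs, hlt⟩ := exists_isSwitch_projPotential_lt hreg hE
  obtain ⟨E'', hs', hbal⟩ := exists_reflTransGen_isSwitch_bBalanced E' (by rwa [hs.hDeg_eq.1])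
  exact ⟨E'', .head hs hs', hbal⟩
termination_by projPotential E

/-- if a third almost-regular degree sequence `D = (D_A, D_B, D_C)` has a
realization `H`, then it also has a realization `H'` whose `(A,B)`-projection is
`B`-balanced, and `H'` can be obtained from `H` by a finite series of switches. -/
theorem third_almost_regular_balanced_realization
    (dA : A → ℕ) (dB : B → ℕ) (dC : C → ℕ) (k : ℕ)
    (hreg : ∀ a : A, dA a = k ∨ dA a + 1 = k)
    (H : Finset (A × B × C))
    (hHA : ∀ a, hDegA H a = dA a) (hHB : ∀ b, hDegB H b = dB b)
    (hHC : ∀ c, hDegC H c = dC c) :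
    ∃ H' : Finset (A × B × C),
      Relation.ReflTransGen IsSwitch H H' ∧
      (∀ a, hDegA H' a = dA a) ∧ (∀ b, hDegB H' b = dB b) ∧
      (∀ c, hDegC H' c = dC c) ∧ BBalanced H' := by
  obtain ⟨H', hs, hbal⟩ := exists_reflTransGen_isSwitch_bBalanced H (by simpa only [hHA] using hreg)
  obtain ⟨hA, hB, hC⟩ := hDeg_eq_of_reflTransGen_isSwitch hs
  exact ⟨H', hs, hA ▸ hHA, hB ▸ hHB, hC ▸ hHC, hbal⟩
end

section
/- Let D = (D_A, D_B, D_C) be a third almost-regular degree sequence, and suppose Ḡ is a B-balanced bipartite multigraph on vertex classes A, B whose degree sequences on A and B are D_A and D_B, respectively. Let D_{A×B} be the sequence of entries of the adjacency matrix of Ḡ (i.e., the multiplicities m_{ij} of parallel edges between a_i and b_j). Then D is graphic as a partite 3-uniform hypergraph degree sequence if and only if the bipartite degree sequence D̄ = (D_{A×B}, D_C) is graphic as a bipartite simple graph degree sequence. -/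
open Finset

variable {A B C : Type*} [Fintype A] [Fintype B] [Fintype C]
  [DecidableEq A] [DecidableEq B] [DecidableEq C]

set_option linter.unusedSectionVars false

private lemma sum_card_fiber {α ι : Type*} [DecidableEq α] [Fintype ι] [DecidableEq ι]
    (s : Finset α) (f : α → ι) :
    ∑ i : ι, (s.filter fun x => f x = i).card = s.card :=
  (Finset.card_eq_sum_card_fiberwise (fun x _ => Finset.mem_univ (f x))).symm

private lemma exists_private_nbr (F : Finset ((A × B) × C)) (p q : A × B)
    (h : (F.filter fun e => e.1 = q).card < (F.filter fun e => e.1 = p).card) :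
    ∃ c : C, (p, c) ∈ F ∧ (q, c) ∉ F := by
  have hcard : ∀ r : A × B, ((F.filter fun e => e.1 = r).image Prod.snd).card
      = (F.filter fun e => e.1 = r).card := by
    intro r
    apply Finset.card_image_of_injOn
    intro x hx y hy hxy
    simp only [Finset.coe_filter, Set.mem_setOf_eq] at hx hy
    exact Prod.ext (hx.2.trans hy.2.symm) hxy
  have hns : ¬ ((F.filter fun e => e.1 = p).image Prod.snd ⊆
      (F.filter fun e => e.1 = q).image Prod.snd) := by
    intro hsub
    have := Finset.card_le_card hsub
    rw [hcard, hcard] at this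
    omega
  obtain ⟨c, hcp, hcq⟩ := Finset.not_subset.mp hns
  refine ⟨c, ?_, ?_⟩
  · simp only [mem_image, mem_filter] at hcp
    obtain ⟨e, ⟨heF, he1⟩, he2⟩ := hcp
    have : e = (p, c) := Prod.ext he1 he2
    rwa [this] at heF
  · intro hqc
    exact hcq (Finset.mem_image.mpr ⟨(q, c), Finset.mem_filter.mpr ⟨hqc, rfl⟩, rfl⟩)

private lemma filter_swap_fst (F : Finset ((A × B) × C)) (p q : A × B) (c : C)
    (hp : (p, c) ∈ F) (hq : (q, c) ∉ F) (hpq : p ≠ q) (r : A × B) :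
    ((insert (q, c) (F.erase (p, c))).filter fun e => e.1 = r).card =
      if r = p then (F.filter fun e => e.1 = r).card - 1
      else if r = q then (F.filter fun e => e.1 = r).card + 1
      else (F.filter fun e => e.1 = r).card := by
  rw [Finset.filter_insert, Finset.filter_erase]
  by_cases hrp : r = p
  · rw [if_neg (fun h : (q, c).1 = r => hpq (((h : q = r)).trans hrp).symm), if_pos hrp,
      Finset.card_erase_of_mem
        (show (p, c) ∈ F.filter fun e => e.1 = r from Finset.mem_filter.mpr ⟨hp, hrp.symm⟩)]
  · by_cases hrq : r = q
    · rw [if_pos (show (q, c).1 = r from hrq.symm), if_neg hrp, if_pos hrq,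
        Finset.erase_eq_of_notMem
          (show (p, c) ∉ F.filter (fun e => e.1 = r) from
            fun h => hrp ((Finset.mem_filter.mp h).2 : p = r).symm),
        Finset.card_insert_of_notMem
          (show (q, c) ∉ F.filter (fun e => e.1 = r) from
            fun h => hq (Finset.mem_filter.mp h).1)]
    · rw [if_neg (fun h : (q, c).1 = r => hrq ((h : q = r)).symm), if_neg hrp, if_neg hrq,
        Finset.erase_eq_of_notMem
          (show (p, c) ∉ F.filter (fun e => e.1 = r) from
            fun h => hrp ((Finset.mem_filter.mp h).2 : p = r).symm)]

private lemma filter_swap_snd (F : Finset ((A × B) × C)) (p q : A × B) (c : C)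
    (hp : (p, c) ∈ F) (hq : (q, c) ∉ F) (hpq : p ≠ q) (c' : C) :
    ((insert (q, c) (F.erase (p, c))).filter fun e => e.2 = c').card =
      (F.filter fun e => e.2 = c').card := by
  rw [Finset.filter_insert, Finset.filter_erase]
  by_cases hc : c = c'
  · subst hc
    have h1 : 1 ≤ (F.filter fun e => e.2 = c).card :=
      Finset.card_pos.mpr ⟨(p, c), Finset.mem_filter.mpr ⟨hp, rfl⟩⟩
    rw [if_pos rfl,
      Finset.card_insert_of_notMem
        (show (q, c) ∉ (F.filter fun e => e.2 = c).erase (p, c) from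
          fun h => hq (Finset.mem_filter.mp (Finset.mem_erase.mp h).2).1),
      Finset.card_erase_of_mem
        (show (p, c) ∈ F.filter fun e => e.2 = c from Finset.mem_filter.mpr ⟨hp, rfl⟩)]
    omega
  · rw [if_neg hc, Finset.erase_eq_of_notMem (by simp [hc])]

private lemma exists_gt_lt (f g : A → ℕ) (hsum : ∑ a, f a = ∑ a, g a) (a0 : A)
    (h : f a0 ≠ g a0) : (∃ a, g a < f a) ∧ (∃ a, f a < g a) := by
  constructor
  · by_contra hc
    push_neg at hc
    have := Finset.sum_lt_sum (fun a _ => hc a)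
      ⟨a0, Finset.mem_univ a0, lt_of_le_of_ne (hc a0) h⟩
    omega
  · by_contra hc
    push_neg at hc
    have := Finset.sum_lt_sum (fun a _ => hc a)
      ⟨a0, Finset.mem_univ a0, lt_of_le_of_ne (hc a0) (Ne.symm h)⟩
    omega

set_option maxHeartbeats 1000000 in
private lemma balance_aux (m : A → B → ℕ)
    (hbal : ∀ b : B, ∃ l : ℕ, ∀ a : A, m a b = l ∨ m a b + 1 = l) :
    ∀ (n : ℕ) (F : Finset ((A × B) × C)),
      (∑ p : A × B, Nat.dist ((F.filter fun e => e.1 = p).card) (m p.1 p.2)) = n →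
      (∀ b : B, ∑ a : A, (F.filter fun e => e.1 = (a, b)).card = ∑ a : A, m a b) →
      ∃ F' : Finset ((A × B) × C),
        (∀ p : A × B, (F'.filter fun e => e.1 = p).card = m p.1 p.2) ∧
        ∀ c : C, (F'.filter fun e => e.2 = c).card = (F.filter fun e => e.2 = c).card := by
  intro n
  induction n using Nat.strong_induction_on with
  | _ n ih =>
    intro F hΦ hcols
    by_cases hdone : ∀ p : A × B, (F.filter fun e => e.1 = p).card = m p.1 p.2
    · exact ⟨F, hdone, fun c => rfl⟩
    · push_neg at hdone
      obtain ⟨⟨a0, b⟩, ha0⟩ := hdone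
      obtain ⟨⟨a1, h1⟩, ⟨a2, h2⟩⟩ := exists_gt_lt
        (fun a => (F.filter fun e => e.1 = ((a, b) : A × B)).card) (fun a => m a b)
        (hcols b) a0 ha0
      obtain ⟨l, hl⟩ := hbal b
      have hlt : (F.filter fun e => e.1 = ((a2, b) : A × B)).card <
          (F.filter fun e => e.1 = ((a1, b) : A × B)).card := by
        rcases hl a1 with h | h <;> rcases hl a2 with h' | h' <;> omega
      obtain ⟨c, hc1, hc2⟩ := exists_private_nbr F (a1, b) (a2, b) hlt
      have hpq : ((a1, b) : A × B) ≠ (a2, b) := by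
        intro h
        rw [h] at hlt
        omega
      set F' := insert ((a2, b), c) (F.erase ((a1, b), c)) with hF'
      have hmult := filter_swap_fst F (a1, b) (a2, b) c hc1 hc2 hpq
      have hsnd := filter_swap_snd F (a1, b) (a2, b) c hc1 hc2 hpq
      -- the potential strictly decreases
      have hle : ∀ p ∈ Finset.univ (α := A × B),
          Nat.dist ((F'.filter fun e => e.1 = p).card) (m p.1 p.2) ≤
          Nat.dist ((F.filter fun e => e.1 = p).card) (m p.1 p.2) := by
        intro p _
        rw [hmult p]
        split_ifs with hp hq
        · subst hp
          simp only [Nat.dist]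
          omega
        · subst hq
          simp only [Nat.dist]
          omega
        · exact le_refl _
      have hstrict : Nat.dist ((F'.filter fun e => e.1 = ((a1, b) : A × B)).card)
            (m a1 b) < Nat.dist ((F.filter fun e => e.1 = ((a1, b) : A × B)).card) (m a1 b) := by
        rw [hmult (a1, b), if_pos rfl]
        simp only [Nat.dist]
        omega
      have hΦ' : (∑ p : A × B, Nat.dist ((F'.filter fun e => e.1 = p).card) (m p.1 p.2)) < n := by
        rw [← hΦ]
        exact Finset.sum_lt_sum hle ⟨(a1, b), Finset.mem_univ _, hstrict⟩
      -- column sums are preserved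
      have key : ∀ (a : A) (b' : B),
          ((F'.filter fun e => e.1 = (a, b')).card) + (if ((a, b') : A × B) = (a1, b) then 1 else 0)
          = ((F.filter fun e => e.1 = (a, b')).card)
            + (if ((a, b') : A × B) = (a2, b) then 1 else 0) := by
        intro a b'
        have hm := hmult (a, b')
        by_cases hp : ((a, b') : A × B) = (a1, b)
        · rw [if_pos hp] at hm
          rw [hm, if_pos hp, if_neg (by rw [hp]; exact hpq)]
          have h1' : 1 ≤ (F.filter fun e => e.1 = ((a, b') : A × B)).card := by
            rw [hp]; omega
          omega
        · rw [if_neg hp] at hm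
          by_cases hq : ((a, b') : A × B) = (a2, b)
          · rw [if_pos hq] at hm
            rw [hm, if_neg hp, if_pos hq]
          · rw [if_neg hq] at hm
            rw [hm, if_neg hp, if_neg hq]
      have hcols' : ∀ b' : B, ∑ a : A, (F'.filter fun e => e.1 = (a, b')).card = ∑ a : A, m a b' := by
        intro b'
        have hsum : ∑ a : A, (((F'.filter fun e => e.1 = (a, b')).card)
              + (if ((a, b') : A × B) = (a1, b) then 1 else 0))
            = ∑ a : A, (((F.filter fun e => e.1 = (a, b')).card)
              + (if ((a, b') : A × B) = (a2, b) then 1 else 0)) :=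
          Finset.sum_congr rfl (fun a _ => key a b')
        rw [Finset.sum_add_distrib, Finset.sum_add_distrib] at hsum
        have hind : ∀ a' : A, (∑ a : A, if ((a, b') : A × B) = (a', b) then 1 else 0)
            = if b' = b then 1 else 0 := by
          intro a'
          by_cases hb : b' = b
          · subst hb
            simp [Prod.ext_iff]
          · simp [Prod.ext_iff, hb]
        rw [hind a1, hind a2] at hsum
        have := hcols b'
        omega
      obtain ⟨F'', hF''1, hF''2⟩ := ih _ hΦ' F' rfl hcols'
      exact ⟨F'', hF''1, fun c' => (hF''2 c').trans (hsnd c')⟩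

private lemma fiberE_a (E : Finset (A × B × C)) (a : A) :
    ∑ b : B, (E.filter fun e => (e.1, e.2.1) = ((a, b) : A × B)).card
      = (E.filter fun e => e.1 = a).card := by
  have h := sum_card_fiber (E.filter fun e => e.1 = a) (fun e => e.2.1)
  rw [← h]
  refine Finset.sum_congr rfl fun b _ => ?_
  rw [Finset.filter_filter]
  congr 1
  apply Finset.filter_congr
  intro e _
  simp [Prod.ext_iff]

private lemma fiberE_b (E : Finset (A × B × C)) (b : B) :
    ∑ a : A, (E.filter fun e => (e.1, e.2.1) = ((a, b) : A × B)).card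
      = (E.filter fun e => e.2.1 = b).card := by
  have h := sum_card_fiber (E.filter fun e => e.2.1 = b) (fun e => e.1)
  rw [← h]
  refine Finset.sum_congr rfl fun a _ => ?_
  rw [Finset.filter_filter]
  congr 1
  apply Finset.filter_congr
  intro e _
  simp [Prod.ext_iff, and_comm]

private lemma fiberF_a (F : Finset ((A × B) × C)) (a : A) :
    ∑ b : B, (F.filter fun e => e.1 = ((a, b) : A × B)).card
      = (F.filter fun e => e.1.1 = a).card := by
  have h := sum_card_fiber (F.filter fun e => e.1.1 = a) (fun e => e.1.2)
  rw [← h]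
  refine Finset.sum_congr rfl fun b _ => ?_
  rw [Finset.filter_filter]
  congr 1
  apply Finset.filter_congr
  intro e _
  simp [Prod.ext_iff]

private lemma fiberF_b (F : Finset ((A × B) × C)) (b : B) :
    ∑ a : A, (F.filter fun e => e.1 = ((a, b) : A × B)).card
      = (F.filter fun e => e.1.2 = b).card := by
  have h := sum_card_fiber (F.filter fun e => e.1.2 = b) (fun e => e.1.1)
  rw [← h]
  refine Finset.sum_congr rfl fun a _ => ?_
  rw [Finset.filter_filter]
  congr 1
  apply Finset.filter_congr
  intro e _
  simp [Prod.ext_iff, and_comm]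

/-- let `D = (D_A, D_B, D_C)` be third almost-regular and let `Ḡ` be a
`B`-balanced bipartite multigraph (given by its edge multiplicities `m`) with degree
sequences `D_A` on `A` and `D_B` on `B`. Then `D` is graphic as a partite 3-uniform
hypergraph degree sequence iff the bipartite degree sequence `(D_{A×B}, D_C)`, where
`D_{A×B}(a,b) = m a b`, is graphic as a bipartite simple graph degree sequence. -/
theorem third_almost_regular_graphic_iff
    (dA : A → ℕ) (dB : B → ℕ) (dC : C → ℕ) (k : ℕ)
    (hreg : ∀ a : A, dA a = k ∨ dA a + 1 = k)
    (m : A → B → ℕ)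
    (hrow : ∀ a : A, ∑ b : B, m a b = dA a)
    (hcol : ∀ b : B, ∑ a : A, m a b = dB b)
    (hbal : ∀ b : B, ∃ l : ℕ, ∀ a : A, m a b = l ∨ m a b + 1 = l) :
    (∃ E : Finset (A × B × C),
        (∀ a, hDegA E a = dA a) ∧ (∀ b, hDegB E b = dB b) ∧ (∀ c, hDegC E c = dC c))
    ↔
    (∃ F : Finset ((A × B) × C),
        (∀ p : A × B, (F.filter fun e => e.1 = p).card = m p.1 p.2) ∧
        (∀ c : C, (F.filter fun e => e.2 = c).card = dC c)) := by
  constructor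
  · rintro ⟨E, hA, hB, hC⟩
    set F0 : Finset ((A × B) × C) := E.map (Equiv.prodAssoc A B C).symm.toEmbedding with hF0
    have hmult : ∀ p : A × B, (F0.filter fun e => e.1 = p).card
        = (E.filter fun e => (e.1, e.2.1) = p).card := by
      intro p
      rw [hF0, Finset.filter_map, Finset.card_map]
      rfl
    have hrd : ∀ c : C, (F0.filter fun e => e.2 = c).card = dC c := by
      intro c
      rw [hF0, Finset.filter_map, Finset.card_map]
      exact hC c
    have hcols0 : ∀ b : B, ∑ a : A, (F0.filter fun e => e.1 = ((a, b) : A × B)).card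
        = ∑ a : A, m a b := by
      intro b
      calc ∑ a : A, (F0.filter fun e => e.1 = ((a, b) : A × B)).card
          = ∑ a : A, (E.filter fun e => (e.1, e.2.1) = ((a, b) : A × B)).card :=
            Finset.sum_congr rfl fun a _ => hmult (a, b)
        _ = (E.filter fun e => e.2.1 = b).card := fiberE_b E b
        _ = dB b := hB b
        _ = ∑ a : A, m a b := (hcol b).symm
    obtain ⟨F', h1, h2⟩ := balance_aux m hbal _ F0 rfl hcols0
    exact ⟨F', h1, fun c => (h2 c).trans (hrd c)⟩
  · rintro ⟨F, h1, h2⟩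
    refine ⟨F.map (Equiv.prodAssoc A B C).toEmbedding, fun a => ?_, fun b => ?_, fun c => ?_⟩
    · show ((F.map (Equiv.prodAssoc A B C).toEmbedding).filter fun e => e.1 = a).card = dA a
      rw [Finset.filter_map, Finset.card_map]
      have : ((F.filter fun e => e.1.1 = a)).card = ∑ b : B, m a b := by
        rw [← fiberF_a F a]
        exact Finset.sum_congr rfl fun b _ => h1 (a, b)
      show (F.filter fun e => e.1.1 = a).card = dA a
      rw [this, hrow a]
    · show ((F.map (Equiv.prodAssoc A B C).toEmbedding).filter fun e => e.2.1 = b).card = dB b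
      rw [Finset.filter_map, Finset.card_map]
      have : ((F.filter fun e => e.1.2 = b)).card = ∑ a : A, m a b := by
        rw [← fiberF_b F b]
        exact Finset.sum_congr rfl fun a _ => h1 (a, b)
      show (F.filter fun e => e.1.2 = b).card = dB b
      rw [this, hcol b]
    · show ((F.map (Equiv.prodAssoc A B C).toEmbedding).filter fun e => e.2.2 = c).card = dC c
      rw [Finset.filter_map, Finset.card_map]
      exact h2 c
end

section
/- Let D = (D_A, D_B, D_C) be any partite 3-uniform hypergraph degree sequence, and let H₁ and H₂ be two realizations of D. Then H₁ can be transformed into H₂ by a finite series of hinge-flip and switch operations. -/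
open Finset

variable {A B C : Type*} [Fintype A] [Fintype B] [Fintype C]
  [DecidableEq A] [DecidableEq B] [DecidableEq C]

/-- A single hinge-flip operation (moving the vertex of one hyperedge in any one of
the three vertex classes): a hyperedge `(a,b,c)` is removed and a hyperedge differing
from it in exactly one coordinate (and not previously present) is added. -/
def IsHingeFlip (E E' : Finset (A × B × C)) : Prop :=
  (∃ a a' b c, (a, b, c) ∈ E ∧ (a', b, c) ∉ E ∧
    E' = insert (a', b, c) (E.erase (a, b, c))) ∨
  (∃ b b' a c, (a, b, c) ∈ E ∧ (a, b', c) ∉ E ∧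
    E' = insert (a, b', c) (E.erase (a, b, c))) ∨
  (∃ c c' a b, (a, b, c) ∈ E ∧ (a, b, c') ∉ E ∧
    E' = insert (a, b, c') (E.erase (a, b, c)))


/-- Hamming distance between two triples. -/
def hdist (e f : A × B × C) : ℕ :=
  (if e.1 = f.1 then 0 else 1) + (if e.2.1 = f.2.1 then 0 else 1) +
    (if e.2.2 = f.2.2 then 0 else 1)

lemma hdist_le_three (e f : A × B × C) : hdist e f ≤ 3 := by
  unfold hdist; split <;> split <;> split <;> omega

lemma hdist_eq_zero {e f : A × B × C} (h : hdist e f = 0) : e = f := by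
  obtain ⟨a, b, c⟩ := e; obtain ⟨a', b', c'⟩ := f
  unfold hdist at h
  by_cases h1 : a = a' <;> by_cases h2 : b = b' <;> by_cases h3 : c = c' <;>
    simp_all

lemma hinge_step {E : Finset (A × B × C)} {e f : A × B × C}
    (he : e ∈ E) (hf : f ∉ E) (hd : hdist e f ≤ 1) (hne : e ≠ f) :
    IsHingeFlip E (insert f (E.erase e)) := by
  obtain ⟨a, b, c⟩ := e; obtain ⟨a', b', c'⟩ := f
  unfold hdist at hd
  simp only at hd
  by_cases h1 : a = a'
  · by_cases h2 : b = b'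
    · by_cases h3 : c = c'
      · exact absurd (by rw [h1, h2, h3]) hne
      · subst h1; subst h2
        exact Or.inr (Or.inr ⟨c, c', a, b, he, hf, rfl⟩)
    · have h3 : c = c' := by
        by_contra h3; simp only [if_neg h2, if_neg h3] at hd; omega
      subst h1; subst h3
      exact Or.inr (Or.inl ⟨b, b', a, c, he, hf, rfl⟩)
  · have h2 : b = b' := by
      by_contra h2; simp only [if_neg h1, if_neg h2] at hd; omega
    have h3 : c = c' := by
      by_contra h3; simp only [if_neg h1, if_neg h3] at hd; omega
    subst h2; subst h3
    exact Or.inl ⟨a, a', b, c, he, hf, rfl⟩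

lemma exists_mid {e f : A × B × C} (h : 2 ≤ hdist e f) :
    ∃ g : A × B × C, hdist e g = 1 ∧ hdist g f = hdist e f - 1 ∧ g ≠ f ∧ g ≠ e := by
  obtain ⟨a, b, c⟩ := e; obtain ⟨a', b', c'⟩ := f
  unfold hdist at h ⊢
  simp only at h ⊢
  by_cases h1 : a = a'
  · by_cases h2 : b = b'
    · by_cases h3 : c = c' <;> simp [h1, h2, h3] at h
    · by_cases h3 : c = c'
      · simp [h1, h2, h3] at h
      · exact ⟨(a, b', c), by simp [h2], by simp [h1, h2, h3], by simp [Prod.ext_iff, h3],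
          by simp [Prod.ext_iff, Ne.symm h2]⟩
  · refine ⟨(a', b, c), by simp [h1], ?_, ?_, by simp [Prod.ext_iff, Ne.symm h1]⟩
    · by_cases h2 : b = b' <;> by_cases h3 : c = c' <;> simp [h1, h2, h3] <;>
        simp [h1, h2, h3] at h
    · by_cases h2 : b = b'
      · by_cases h3 : c = c'
        · simp [h1, h2, h3] at h
        · simp [Prod.ext_iff, h3]
      · simp [Prod.ext_iff, h2]

lemma hinge_chain : ∀ (d : ℕ) (E : Finset (A × B × C)) (e f : A × B × C),
    e ∈ E → f ∉ E → hdist e f ≤ d →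
    Relation.ReflTransGen (fun X Y : Finset (A × B × C) => IsSwitch X Y ∨ IsHingeFlip X Y)
      E (insert f (E.erase e))
  | 0, E, e, f, he, hf, hd => by
      exact absurd ((hdist_eq_zero (Nat.le_zero.mp hd)) ▸ he) hf
  | d + 1, E, e, f, he, hf, hd => by
      have hne : e ≠ f := by rintro rfl; exact hf he
      by_cases hd1 : hdist e f ≤ 1
      · exact Relation.ReflTransGen.single (Or.inr (hinge_step he hf hd1 hne))
      · push_neg at hd1
        obtain ⟨g, hg1, hg2, hgf, hge⟩ := exists_mid hd1
        have hgfd : hdist g f ≤ d := by omega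
        by_cases hgE : g ∈ E
        · -- blocked: first move g to f, then move e to g
          have step1 := hinge_chain d E g f hgE hf hgfd
          have heE2 : e ∈ insert f (E.erase g) :=
            Finset.mem_insert_of_mem (Finset.mem_erase.mpr ⟨fun h => hge h.symm, he⟩)
          have hgE2 : g ∉ insert f (E.erase g) := by
            simp [Finset.mem_insert, hgf]
          have hdeg : hdist e g ≤ d := by omega
          have step2 := hinge_chain d (insert f (E.erase g)) e g heE2 hgE2 hdeg
          have hset : insert g ((insert f (E.erase g)).erase e) = insert f (E.erase e) := by
            ext x
            by_cases hxg : x = g <;> by_cases hxf : x = f <;> by_cases hxe : x = e <;>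
              simp_all
          rw [hset] at step2
          exact step1.trans step2
        · -- unblocked: flip e to g, then move g to f
          have hegd : hdist e g ≤ 1 := le_of_eq hg1
          have step1 : IsHingeFlip E (insert g (E.erase e)) :=
            hinge_step he hgE hegd (fun h => hge h.symm)
          have hgE1 : g ∈ insert g (E.erase e) := Finset.mem_insert_self _ _
          have hfE1 : f ∉ insert g (E.erase e) := by
            intro hmem
            rcases Finset.mem_insert.mp hmem with h | h
            · exact hgf h.symm
            · exact hf (Finset.mem_of_mem_erase h)
          have step2 := hinge_chain d (insert g (E.erase e)) g f hgE1 hfE1 hgfd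
          have hset : (insert g (E.erase e)).erase g = E.erase e :=
            Finset.erase_insert (fun h => hgE (Finset.mem_of_mem_erase h))
          rw [hset] at step2
          exact Relation.ReflTransGen.head (Or.inr step1) step2

lemma connect_of_card_eq (E₂ : Finset (A × B × C)) :
    ∀ (n : ℕ) (E₁ : Finset (A × B × C)), E₁.card = E₂.card → (E₁ \ E₂).card ≤ n →
    Relation.ReflTransGen (fun X Y : Finset (A × B × C) => IsSwitch X Y ∨ IsHingeFlip X Y)
      E₁ E₂ := by
  intro n
  induction n with
  | zero =>
    intro E₁ hcard hn
    have hsub : E₁ ⊆ E₂ := by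
      rw [← Finset.sdiff_eq_empty_iff_subset, ← Finset.card_eq_zero]
      omega
    rw [Finset.eq_of_subset_of_card_le hsub hcard.ge]
  | succ n ih =>
    intro E₁ hcard hn
    rcases eq_or_ne E₁ E₂ with rfl | hne
    · exact Relation.ReflTransGen.refl
    · have hd1 : (E₁ \ E₂).Nonempty := by
        rw [Finset.nonempty_iff_ne_empty]
        intro h
        exact hne (Finset.eq_of_subset_of_card_le (Finset.sdiff_eq_empty_iff_subset.mp h)
          hcard.ge)
      have hd2 : (E₂ \ E₁).Nonempty := by
        rw [Finset.nonempty_iff_ne_empty]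
        intro h
        exact hne (Finset.eq_of_subset_of_card_le (Finset.sdiff_eq_empty_iff_subset.mp h)
          hcard.le).symm
      obtain ⟨e, hee⟩ := hd1
      obtain ⟨f, hff⟩ := hd2
      rw [Finset.mem_sdiff] at hee hff
      have he1 : e ∈ E₁ := hee.1
      have hf1 : f ∉ E₁ := hff.2
      have chain1 := hinge_chain 3 E₁ e f he1 hf1 (hdist_le_three e f)
      set E' := insert f (E₁.erase e) with hE'
      have hcard' : E'.card = E₂.card := by
        rw [hE', Finset.card_insert_of_notMem (fun h => hf1 (Finset.mem_of_mem_erase h)),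
          Finset.card_erase_of_mem he1]
        have : 1 ≤ E₁.card := Finset.card_pos.mpr ⟨e, he1⟩
        omega
      have hsd : E' \ E₂ = (E₁ \ E₂).erase e := by
        rw [hE']
        ext x
        simp only [Finset.mem_sdiff, Finset.mem_insert, Finset.mem_erase]
        constructor
        · rintro ⟨rfl | ⟨hxe, hxE⟩, hx2⟩
          · exact absurd hff.1 hx2
          · exact ⟨hxe, hxE, hx2⟩
        · rintro ⟨hxe, hxE, hx2⟩
          exact ⟨Or.inr ⟨hxe, hxE⟩, hx2⟩
      have hn' : (E' \ E₂).card ≤ n := by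
        rw [hsd, Finset.card_erase_of_mem (Finset.mem_sdiff.mpr hee)]
        omega
      exact chain1.trans (ih E' hcard' hn')

/-- any two realizations `H₁`, `H₂` of the same partite 3-uniform
hypergraph degree sequence `D = (D_A, D_B, D_C)` can be transformed into each other by
a finite series of hinge-flip and switch operations. -/
theorem hingeflip_switch_connected
    (dA : A → ℕ) (dB : B → ℕ) (dC : C → ℕ)
    (H₁ H₂ : Finset (A × B × C))
    (hH₁A : ∀ a, hDegA H₁ a = dA a) (hH₁B : ∀ b, hDegB H₁ b = dB b)
    (hH₁C : ∀ c, hDegC H₁ c = dC c)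
    (hH₂A : ∀ a, hDegA H₂ a = dA a) (hH₂B : ∀ b, hDegB H₂ b = dB b)
    (hH₂C : ∀ c, hDegC H₂ c = dC c) :
    Relation.ReflTransGen (fun X Y => IsSwitch X Y ∨ IsHingeFlip X Y) H₁ H₂ := by
  have h1 : H₁.card = ∑ a, dA a := by
    rw [Finset.card_eq_sum_card_fiberwise (f := fun x => x.1) (t := Finset.univ)
      (fun x _ => Finset.mem_univ x.1)]
    exact Finset.sum_congr rfl fun a _ => hH₁A a
  have h2 : H₂.card = ∑ a, dA a := by
    rw [Finset.card_eq_sum_card_fiberwise (f := fun x => x.1) (t := Finset.univ)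
      (fun x _ => Finset.mem_univ x.1)]
    exact Finset.sum_congr rfl fun a _ => hH₂A a
  exact connect_of_card_eq H₂ (H₁ \ H₂).card H₁ (h1.trans h2.symm) le_rfl
end

section
/- Let H₁ and H₂ be two B-balanced partite 3-uniform hypergraph realizations of the same degree sequence D = (D_A, D_B, D_C). If H₁ and H₂ have the same (A,B)-projection, then H₁ can be transformed into H₂ by a finite series of switch operations, each acting on the C-coordinates of a pair of hyperedges (deleting (a₁,b₁,c₁) and (a₂,b₂,c₂) and creating (a₁,b₁,c₂) and (a₂,b₂,c₁)). -/
open Finset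

variable {A B C : Type*} [Fintype A] [Fintype B] [Fintype C]
  [DecidableEq A] [DecidableEq B] [DecidableEq C]

/-- A switch operation acting on the `C`-coordinates of a pair of hyperedges:
`(a₁,b₁,c₁)` and `(a₂,b₂,c₂)` are deleted and `(a₁,b₁,c₂)`, `(a₂,b₂,c₁)` (not
previously present) are created. -/
def IsSwitchC (E E' : Finset (A × B × C)) : Prop :=
  ∃ c₁ c₂ a₁ b₁ a₂ b₂, (a₁, b₁, c₁) ∈ E ∧ (a₂, b₂, c₂) ∈ E ∧
    (a₁, b₁, c₂) ∉ E ∧ (a₂, b₂, c₁) ∉ E ∧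
    E' = insert (a₁, b₁, c₂) (insert (a₂, b₂, c₁)
      ((E.erase (a₁, b₁, c₁)).erase (a₂, b₂, c₂)))

set_option linter.unusedSectionVars false in
lemma mk_switch {E : Finset (A × B × C)} {a₁ a₂ : A} {b₁ b₂ : B} {c₁ c₂ : C}
    (h1 : (a₁,b₁,c₁) ∈ E) (h2 : (a₂,b₂,c₂) ∈ E) (h3 : (a₁,b₁,c₂) ∉ E) (h4 : (a₂,b₂,c₁) ∉ E) :
    IsSwitchC E (insert (a₁,b₁,c₂) (insert (a₂,b₂,c₁) ((E.erase (a₁,b₁,c₁)).erase (a₂,b₂,c₂)))) :=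
  ⟨c₁,c₂,a₁,b₁,a₂,b₂,h1,h2,h3,h4,rfl⟩

set_option linter.unusedSectionVars false in
lemma card_filter_switch {E : Finset (A × B × C)} {u v x y : A × B × C}
    (hu : u ∈ E) (hv : v ∈ E) (hx : x ∉ E) (hy : y ∉ E) (huv : u ≠ v) (hxy : x ≠ y)
    (p : A × B × C → Prop) [DecidablePred p]
    (hw : (if p u then 1 else 0) + (if p v then 1 else 0)
        = (if p x then 1 else 0) + (if p y then (1:ℕ) else 0)) :
    ((insert x (insert y ((E.erase u).erase v))).filter p).card = (E.filter p).card := by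
  have hv' : v ∈ E.erase u := mem_erase.2 ⟨huv.symm, hv⟩
  have hy' : y ∉ (E.erase u).erase v := fun h => hy (mem_of_mem_erase (mem_of_mem_erase h))
  have hx' : x ∉ insert y ((E.erase u).erase v) := by
    simp only [mem_insert]
    rintro (rfl | h)
    · exact hxy rfl
    · exact hx (mem_of_mem_erase (mem_of_mem_erase h))
  rw [card_filter, card_filter, sum_insert hx', sum_insert hy',
    ← Finset.add_sum_erase _ _ hu, ← Finset.add_sum_erase _ _ hv']
  have : ∀ S : ℕ, (if p x then 1 else 0) + ((if p y then 1 else 0) + S)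
      = (if p u then 1 else 0) + ((if p v then 1 else 0) + S) := by
    intro S; omega
  exact this _

set_option linter.unusedSectionVars false in
lemma switch_ne_uv {E : Finset (A × B × C)} {a₁ a₂ : A} {b₁ b₂ : B} {c₁ c₂ : C}
    (h1 : (a₁,b₁,c₁) ∈ E) (h4 : (a₂,b₂,c₁) ∉ E) :
    ((a₁,b₁,c₁) : A × B × C) ≠ (a₂,b₂,c₂) := by
  intro h
  rw [Prod.mk.injEq, Prod.mk.injEq] at h
  obtain ⟨rfl, rfl, -⟩ := h
  exact h4 h1

set_option linter.unusedSectionVars false in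
lemma switch_ne_xy {E : Finset (A × B × C)} {a₁ a₂ : A} {b₁ b₂ : B} {c₁ c₂ : C}
    (h1 : (a₁,b₁,c₁) ∈ E) (h3 : (a₁,b₁,c₂) ∉ E) :
    ((a₁,b₁,c₂) : A × B × C) ≠ (a₂,b₂,c₁) := by
  intro h
  rw [Prod.mk.injEq, Prod.mk.injEq] at h
  obtain ⟨-, -, rfl⟩ := h
  exact h3 h1

set_option linter.unusedSectionVars false in
lemma projAB_switch {E E' : Finset (A × B × C)} (h : IsSwitchC E E') (a : A) (b : B) :
    projAB E' a b = projAB E a b := by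
  obtain ⟨c₁,c₂,a₁,b₁,a₂,b₂,h1,h2,h3,h4,rfl⟩ := h
  exact card_filter_switch h1 h2 h3 h4 (switch_ne_uv h1 h4) (switch_ne_xy h1 h3) _
    (by by_cases hA : a₁ = a ∧ b₁ = b <;> by_cases hB : a₂ = a ∧ b₂ = b <;> simp [hA, hB])

set_option linter.unusedSectionVars false in
lemma hDegC_switch {E E' : Finset (A × B × C)} (h : IsSwitchC E E') (c : C) :
    hDegC E' c = hDegC E c := by
  obtain ⟨c₁,c₂,a₁,b₁,a₂,b₂,h1,h2,h3,h4,rfl⟩ := h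
  exact card_filter_switch h1 h2 h3 h4 (switch_ne_uv h1 h4) (switch_ne_xy h1 h3) _
    (by by_cases hA : c₁ = c <;> by_cases hB : c₂ = c <;> simp [hA, hB] <;> omega)

set_option linter.unusedSectionVars false in
lemma isSwitchC_symm {E E' : Finset (A × B × C)} (h : IsSwitchC E E') : IsSwitchC E' E := by
  obtain ⟨c₁,c₂,a₁,b₁,a₂,b₂,h1,h2,h3,h4,rfl⟩ := h
  set u : A × B × C := (a₁,b₁,c₁) with hu_def
  set v : A × B × C := (a₂,b₂,c₂) with hv_def
  set x : A × B × C := (a₁,b₁,c₂) with hx_def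
  set y : A × B × C := (a₂,b₂,c₁) with hy_def
  have hux : u ≠ x := fun h => h3 (h ▸ h1)
  have hvy : v ≠ y := fun h => h4 (h ▸ h2)
  have huy : u ≠ y := by
    intro h; rw [hu_def, hy_def, Prod.mk.injEq, Prod.mk.injEq] at h
    obtain ⟨rfl, rfl, -⟩ := h; exact h4 h1
  have hvx : v ≠ x := by
    intro h; rw [hv_def, hx_def, Prod.mk.injEq, Prod.mk.injEq] at h
    obtain ⟨rfl, rfl, -⟩ := h; exact h3 h2
  have hmem : ∀ z, z ∈ insert x (insert y ((E.erase u).erase v))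
      ↔ z = x ∨ z = y ∨ (z ≠ v ∧ z ≠ u ∧ z ∈ E) := by
    intro z; simp [mem_insert, mem_erase, and_assoc]
  set E' := insert x (insert y ((E.erase u).erase v)) with hE'_def
  have hxE' : x ∈ E' := (hmem x).2 (Or.inl rfl)
  have hyE' : y ∈ E' := (hmem y).2 (Or.inr (Or.inl rfl))
  have huE' : u ∉ E' := by
    rw [hmem]; push_neg
    exact ⟨hux, huy, fun _ h => absurd rfl h⟩
  have hvE' : v ∉ E' := by
    rw [hmem]; push_neg
    exact ⟨hvx, hvy, fun h _ => absurd rfl h⟩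
  have target : ∀ z, z ∈ insert u (insert v ((E'.erase x).erase y))
      ↔ z = u ∨ z = v ∨ (z ≠ y ∧ z ≠ x ∧ z ∈ E') := by
    intro z; simp [mem_insert, mem_erase, and_assoc]
  refine ⟨c₂,c₁,a₁,b₁,a₂,b₂, hxE', hyE', huE', hvE', ?_⟩
  ext z
  rw [target z]
  constructor
  · intro hz
    by_cases hz1 : z = u
    · exact Or.inl hz1
    by_cases hz2 : z = v
    · exact Or.inr (Or.inl hz2)
    exact Or.inr (Or.inr ⟨fun h => h4 (h ▸ hz), fun h => h3 (h ▸ hz),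
      (hmem z).2 (Or.inr (Or.inr ⟨hz2, hz1, hz⟩))⟩)
  · rintro (rfl | rfl | ⟨hzy, hzx, hzE'⟩)
    · exact h1
    · exact h2
    · rcases (hmem z).1 hzE' with rfl | rfl | ⟨-, -, hz⟩
      · exact absurd rfl hzx
      · exact absurd rfl hzy
      · exact hz

set_option linter.unusedSectionVars false in
lemma measure_dropI {F G : Finset (A × B × C)} {u v x y : A × B × C}
    (hu : u ∈ F) (hv : v ∈ F) (hx : x ∉ F) (hy : y ∉ F)
    (huG : u ∉ G) (hvG : v ∉ G) (hxG : x ∈ G) (huv : u ≠ v) :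
    ((insert x (insert y ((F.erase u).erase v)) \ G).card
      + (G \ insert x (insert y ((F.erase u).erase v))).card) + 2
      ≤ (F \ G).card + (G \ F).card := by
  set F' := insert x (insert y ((F.erase u).erase v)) with hF'
  have hmemF' : ∀ z, z ∈ F' ↔ z = x ∨ z = y ∨ (z ≠ v ∧ z ≠ u ∧ z ∈ F) := by
    intro z; simp [hF', mem_insert, mem_erase, and_assoc]
  have h1 : F' \ G ⊆ insert y (((F \ G).erase u).erase v) := by
    intro z hz
    rw [mem_sdiff, hmemF'] at hz
    obtain ⟨(rfl | rfl | ⟨hzv, hzu, hzF⟩), hzG⟩ := hz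
    · exact absurd hxG hzG
    · exact mem_insert_self _ _
    · exact mem_insert_of_mem (mem_erase.2 ⟨hzv, mem_erase.2 ⟨hzu, mem_sdiff.2 ⟨hzF, hzG⟩⟩⟩)
  have h2 : G \ F' ⊆ (G \ F).erase x := by
    intro z hz
    rw [mem_sdiff, hmemF'] at hz
    push_neg at hz
    obtain ⟨hzG, hzx, hzy, hz3⟩ := hz
    refine mem_erase.2 ⟨hzx, mem_sdiff.2 ⟨hzG, fun hzF => ?_⟩⟩
    have hzv : z ≠ v := fun h => hvG (h ▸ hzG)
    have hzu : z ≠ u := fun h => huG (h ▸ hzG)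
    exact (hz3 hzv hzu) hzF
  have huFG : u ∈ F \ G := mem_sdiff.2 ⟨hu, huG⟩
  have hvFG : v ∈ (F \ G).erase u := mem_erase.2 ⟨huv.symm, mem_sdiff.2 ⟨hv, hvG⟩⟩
  have hxGF : x ∈ G \ F := mem_sdiff.2 ⟨hxG, hx⟩
  have c1 : (F' \ G).card ≤ (((F \ G).erase u).erase v).card + 1 :=
    le_trans (card_le_card h1) (card_insert_le _ _)
  have c2 : (G \ F').card ≤ ((G \ F).erase x).card := card_le_card h2
  have e1 : (((F \ G).erase u).erase v).card = ((F \ G).erase u).card - 1 :=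
    card_erase_of_mem hvFG
  have e2 : ((F \ G).erase u).card = (F \ G).card - 1 := card_erase_of_mem huFG
  have e3 : ((G \ F).erase x).card = (G \ F).card - 1 := card_erase_of_mem hxGF
  have p1 : 1 ≤ ((F \ G).erase u).card := card_pos.2 ⟨v, hvFG⟩
  have p2 : 1 ≤ (F \ G).card := card_pos.2 ⟨u, huFG⟩
  have p3 : 1 ≤ (G \ F).card := card_pos.2 ⟨x, hxGF⟩
  omega

set_option linter.unusedSectionVars false in
lemma measure_dropII {F G : Finset (A × B × C)} {u v x y : A × B × C}
    (hu : u ∈ F) (hv : v ∈ F) (hx : x ∉ F) (hy : y ∉ F)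
    (huG : u ∉ G) (hvG : v ∈ G) (hxG : x ∈ G) (hyG : y ∈ G) (hxy : x ≠ y) :
    ((insert x (insert y ((F.erase u).erase v)) \ G).card
      + (G \ insert x (insert y ((F.erase u).erase v))).card) + 2
      ≤ (F \ G).card + (G \ F).card := by
  set F' := insert x (insert y ((F.erase u).erase v)) with hF'
  have hmemF' : ∀ z, z ∈ F' ↔ z = x ∨ z = y ∨ (z ≠ v ∧ z ≠ u ∧ z ∈ F) := by
    intro z; simp [hF', mem_insert, mem_erase, and_assoc]
  have h1 : F' \ G ⊆ (F \ G).erase u := by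
    intro z hz
    rw [mem_sdiff, hmemF'] at hz
    obtain ⟨(rfl | rfl | ⟨hzv, hzu, hzF⟩), hzG⟩ := hz
    · exact absurd hxG hzG
    · exact absurd hyG hzG
    · exact mem_erase.2 ⟨hzu, mem_sdiff.2 ⟨hzF, hzG⟩⟩
  have h2 : G \ F' ⊆ insert v (((G \ F).erase x).erase y) := by
    intro z hz
    rw [mem_sdiff, hmemF'] at hz
    push_neg at hz
    obtain ⟨hzG, hzx, hzy, hz3⟩ := hz
    by_cases hzv : z = v
    · exact hzv ▸ mem_insert_self _ _
    refine mem_insert_of_mem (mem_erase.2 ⟨hzy, mem_erase.2 ⟨hzx, mem_sdiff.2 ⟨hzG, fun hzF => ?_⟩⟩⟩)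
    have hzu : z ≠ u := fun h => huG (h ▸ hzG)
    exact (hz3 hzv hzu) hzF
  have huFG : u ∈ F \ G := mem_sdiff.2 ⟨hu, huG⟩
  have hxGF : x ∈ G \ F := mem_sdiff.2 ⟨hxG, hx⟩
  have hyGF : y ∈ ((G \ F).erase x) := mem_erase.2 ⟨hxy.symm, mem_sdiff.2 ⟨hyG, hy⟩⟩
  have c1 : (F' \ G).card ≤ ((F \ G).erase u).card := card_le_card h1
  have c2 : (G \ F').card ≤ (((G \ F).erase x).erase y).card + 1 :=
    le_trans (card_le_card h2) (card_insert_le _ _)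
  have e1 : ((F \ G).erase u).card = (F \ G).card - 1 := card_erase_of_mem huFG
  have e2 : ((G \ F).erase x).card = (G \ F).card - 1 := card_erase_of_mem hxGF
  have e3 : (((G \ F).erase x).erase y).card = ((G \ F).erase x).card - 1 :=
    card_erase_of_mem hyGF
  have p1 : 1 ≤ (F \ G).card := card_pos.2 ⟨u, huFG⟩
  have p2 : 1 ≤ ((G \ F).erase x).card := card_pos.2 ⟨y, hyGF⟩
  have p3 : 1 ≤ (G \ F).card := card_pos.2 ⟨x, hxGF⟩
  omega

set_option linter.unusedSectionVars false in
lemma rowSet_card (E : Finset (A × B × C)) (a : A) (b : B) :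
    (univ.filter fun c => (a,b,c) ∈ E).card = projAB E a b := by
  rw [projAB]
  apply Finset.card_bij (fun c _ => (a,b,c))
  · intro c hc
    simp only [mem_filter, mem_univ, true_and] at hc
    exact mem_filter.2 ⟨hc, rfl, rfl⟩
  · intro c₁ h₁ c₂ h₂ h
    rw [Prod.mk.injEq, Prod.mk.injEq] at h
    exact h.2.2
  · intro e he
    simp only [mem_filter] at he
    obtain ⟨heE, rfl, rfl⟩ := he
    exact ⟨e.2.2, by simp [heE], rfl⟩

set_option linter.unusedSectionVars false in
lemma colSet_card (E : Finset (A × B × C)) (c : C) :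
    (univ.filter fun q : A × B => (q.1, q.2, c) ∈ E).card = hDegC E c := by
  rw [hDegC]
  apply Finset.card_bij (fun q _ => (q.1, q.2, c))
  · intro q hq
    simp only [mem_filter, mem_univ, true_and] at hq
    exact mem_filter.2 ⟨hq, rfl⟩
  · intro q₁ h₁ q₂ h₂ h
    rw [Prod.mk.injEq, Prod.mk.injEq] at h
    exact Prod.ext h.1 h.2.1
  · intro e he
    simp only [mem_filter] at he
    obtain ⟨heE, rfl⟩ := he
    exact ⟨(e.1, e.2.1), by simp [heE], rfl⟩

set_option linter.unusedSectionVars false in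
lemma card_eq_of_hDegC {E₁ E₂ : Finset (A × B × C)}
    (h : ∀ c, hDegC E₁ c = hDegC E₂ c) : E₁.card = E₂.card := by
  rw [Finset.card_eq_sum_card_fiberwise (f := fun e => e.2.2) (t := univ) (fun x _ => mem_univ _),
    Finset.card_eq_sum_card_fiberwise (f := fun e => e.2.2) (t := univ) (fun x _ => mem_univ _)]
  exact Finset.sum_congr rfl fun c _ => h c

set_option linter.unusedSectionVars false in
lemma sdiff_nonempty_of_card_eq {α : Type*} [DecidableEq α] {S₁ S₂ : Finset α}
    (h : S₁.card = S₂.card) {x : α} (hx₁ : x ∈ S₁) (hx₂ : x ∉ S₂) :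
    (S₂ \ S₁).Nonempty := by
  rw [← Finset.card_pos, Finset.card_sdiff_comm h.symm, Finset.card_pos]
  exact ⟨x, mem_sdiff.2 ⟨hx₁, hx₂⟩⟩

set_option linter.unusedSectionVars false in
lemma card_lt_of_subset_of_mem {α : Type*} [DecidableEq α] {s t : Finset α}
    (h : s ⊆ t) {x : α} (hx : x ∈ t) (hx' : x ∉ s) : s.card < t.card :=
  Finset.card_lt_card ((Finset.ssubset_iff_of_subset h).2 ⟨x, hx, hx'⟩)

set_option linter.unusedSectionVars false in
lemma key_lemma : ∀ (n : ℕ) (E₁ E₂ : Finset (A × B × C)),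
    (E₁ \ E₂).card + (E₂ \ E₁).card ≤ n →
    (∀ a b, projAB E₁ a b = projAB E₂ a b) →
    (∀ c, hDegC E₁ c = hDegC E₂ c) →
    Relation.ReflTransGen IsSwitchC E₁ E₂ := by
  intro n
  induction n with
  | zero =>
    intro E₁ E₂ hm hproj hC
    have h1 : E₁ \ E₂ = ∅ := card_eq_zero.1 (by omega)
    have h2 : E₂ \ E₁ = ∅ := card_eq_zero.1 (by omega)
    have : E₁ = E₂ :=
      subset_antisymm (sdiff_eq_empty_iff_subset.1 h1) (sdiff_eq_empty_iff_subset.1 h2)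
    exact this ▸ Relation.ReflTransGen.refl
  | succ n ih =>
    intro E₁ E₂ hm hproj hC
    by_cases heq : E₁ = E₂
    · exact heq ▸ Relation.ReflTransGen.refl
    have hne : (E₁ \ E₂).Nonempty := by
      rw [Finset.nonempty_iff_ne_empty]
      intro h
      exact heq (Finset.eq_of_subset_of_card_le (sdiff_eq_empty_iff_subset.1 h)
        (card_eq_of_hDegC hC).ge)
    obtain ⟨⟨a, b, c⟩, habc⟩ := hne
    rw [mem_sdiff] at habc
    obtain ⟨hc1, hc2⟩ := habc
    -- find c' with (a,b,c') ∈ E₂ \ E₁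
    have hrow : (univ.filter fun c => (a,b,c) ∈ E₁).card
        = (univ.filter fun c => (a,b,c) ∈ E₂).card := by
      rw [rowSet_card, rowSet_card, hproj]
    obtain ⟨c', hc'⟩ := sdiff_nonempty_of_card_eq hrow
      (mem_filter.2 ⟨mem_univ _, hc1⟩) (by simp [hc2])
    rw [mem_sdiff, mem_filter, mem_filter] at hc'
    have hc'2 : (a,b,c') ∈ E₂ := hc'.1.2
    have hc'1 : (a,b,c') ∉ E₁ := fun h => hc'.2 ⟨mem_univ _, h⟩
    have hcc' : c ≠ c' := fun h => hc'1 (h ▸ hc1)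
    -- Case A
    by_cases hA : ∃ q : A × B, (q.1,q.2,c') ∈ E₁ ∧ (q.1,q.2,c') ∉ E₂ ∧ (q.1,q.2,c) ∉ E₁
    · obtain ⟨⟨a₂, b₂⟩, hq1, hq2, hq3⟩ := hA
      dsimp only at hq1 hq2 hq3
      have hsw := mk_switch hc1 hq1 hc'1 hq3
      have huv : ((a,b,c) : A × B × C) ≠ (a₂,b₂,c') :=
        fun h => hcc' (congrArg (fun e : A × B × C => e.2.2) h)
      have hdrop := measure_dropI hc1 hq1 hc'1 hq3 hc2 hq2 hc'2 huv (y := (a₂,b₂,c))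
      refine Relation.ReflTransGen.head hsw (ih _ E₂ (by omega) ?_ ?_)
      · intro a' b'; rw [projAB_switch hsw, hproj]
      · intro c''; rw [hDegC_switch hsw, hC]
    push_neg at hA
    -- obtain q ∈ N₁ \ N₂
    have hcolc' : (univ.filter fun q : A × B => (q.1,q.2,c') ∈ E₂).card
        = (univ.filter fun q : A × B => (q.1,q.2,c') ∈ E₁).card := by
      rw [colSet_card, colSet_card, hC]
    have hmem1 : ((a,b) : A × B) ∈ univ.filter fun q : A × B => (q.1,q.2,c') ∈ E₂ := by
      simp [hc'2]
    have hmem2 : ((a,b) : A × B) ∉ univ.filter fun q : A × B => (q.1,q.2,c') ∈ E₁ := by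
      simp [hc'1]
    obtain ⟨⟨a₂, b₂⟩, hq⟩ := sdiff_nonempty_of_card_eq hcolc' hmem1 hmem2
    rw [mem_sdiff, mem_filter, mem_filter] at hq
    dsimp only at hq
    have hq1 : (a₂,b₂,c') ∈ E₁ := hq.1.2
    have hq2 : (a₂,b₂,c') ∉ E₂ := fun h => hq.2 ⟨mem_univ _, h⟩
    have hqc : (a₂,b₂,c) ∈ E₁ := hA (a₂,b₂) hq1 hq2
    -- Case B
    by_cases hB : ∃ q : A × B, (q.1,q.2,c') ∈ E₁ ∧ (q.1,q.2,c') ∉ E₂ ∧ (q.1,q.2,c) ∈ E₂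
    · obtain ⟨⟨a₃, b₃⟩, hr1, hr2, hr3⟩ := hB
      dsimp only at hr1 hr2 hr3
      have hr4 : (a₃,b₃,c) ∈ E₁ := hA (a₃,b₃) hr1 hr2
      have hsw := mk_switch hc'2 hr3 hc2 hr2
      have hxy : ((a,b,c) : A × B × C) ≠ (a₃,b₃,c') :=
        fun h => hcc' (congrArg (fun e : A × B × C => e.2.2) h)
      have hdrop := measure_dropII hc'2 hr3 hc2 hr2 hc'1 hr4 hc1 hr1 hxy
      have h1 := ih E₁ (insert (a,b,c) (insert (a₃,b₃,c') ((E₂.erase (a,b,c')).erase (a₃,b₃,c))))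
        (by omega)
        (fun a' b' => by rw [hproj, projAB_switch hsw])
        (fun c'' => by rw [hC, hDegC_switch hsw])
      exact h1.tail (isSwitchC_symm hsw)
    push_neg at hB
    -- Case C
    by_cases hCs : ∃ r : A × B, (r.1,r.2,c) ∈ E₂ ∧ (r.1,r.2,c) ∉ E₁ ∧ (r.1,r.2,c') ∉ E₂
    · obtain ⟨⟨a₃, b₃⟩, hr1, hr2, hr3⟩ := hCs
      dsimp only at hr1 hr2 hr3
      have hsw := mk_switch hc'2 hr1 hc2 hr3
      have huv : ((a,b,c') : A × B × C) ≠ (a₃,b₃,c) :=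
        fun h => hcc' ((congrArg (fun e : A × B × C => e.2.2) h).symm)
      have hdrop := measure_dropI hc'2 hr1 hc2 hr3 hc'1 hr2 hc1 huv (y := (a₃,b₃,c'))
      have h1 := ih E₁ (insert (a,b,c) (insert (a₃,b₃,c') ((E₂.erase (a,b,c')).erase (a₃,b₃,c))))
        (by omega)
        (fun a' b' => by rw [hproj, projAB_switch hsw])
        (fun c'' => by rw [hC, hDegC_switch hsw])
      exact h1.tail (isSwitchC_symm hsw)
    push_neg at hCs
    -- Case D
    by_cases hD : ∃ r : A × B, (r.1,r.2,c) ∈ E₂ ∧ (r.1,r.2,c) ∉ E₁ ∧ (r.1,r.2,c') ∈ E₁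
    · obtain ⟨⟨a₃, b₃⟩, hr1, hr2, hr3⟩ := hD
      dsimp only at hr1 hr2 hr3
      have hr4 : (a₃,b₃,c') ∈ E₂ := hCs (a₃,b₃) hr1 hr2
      have hsw := mk_switch hc1 hr3 hc'1 hr2
      have hxy : ((a,b,c') : A × B × C) ≠ (a₃,b₃,c) :=
        fun h => hcc' ((congrArg (fun e : A × B × C => e.2.2) h).symm)
      have hdrop := measure_dropII hc1 hr3 hc'1 hr2 hc2 hr4 hc'2 hr1 hxy
      refine Relation.ReflTransGen.head hsw (ih _ E₂ (by omega) ?_ ?_)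
      · intro a' b'; rw [projAB_switch hsw, hproj]
      · intro c''; rw [hDegC_switch hsw, hC]
    push_neg at hD
    -- contradiction
    exfalso
    set N₁ := univ.filter fun q : A × B => (q.1,q.2,c') ∈ E₁ with hN₁
    set N₂ := univ.filter fun q : A × B => (q.1,q.2,c') ∈ E₂ with hN₂
    set M₁ := univ.filter fun q : A × B => (q.1,q.2,c) ∈ E₁ with hM₁
    set M₂ := univ.filter fun q : A × B => (q.1,q.2,c) ∈ E₂ with hM₂
    have hNM : N₁ \ N₂ ⊆ M₁ \ M₂ := by
      intro q hqm
      rw [mem_sdiff, hN₁, hN₂, mem_filter, mem_filter] at hqm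
      obtain ⟨⟨-, hq1'⟩, hq2'⟩ := hqm
      have hq2'' : (q.1,q.2,c') ∉ E₂ := fun h => hq2' ⟨mem_univ _, h⟩
      rw [mem_sdiff, hM₁, hM₂, mem_filter, mem_filter]
      exact ⟨⟨mem_univ _, hA q hq1' hq2''⟩, fun h => hB q hq1' hq2'' h.2⟩
    have hMN : M₂ \ M₁ ⊆ N₂ \ N₁ := by
      intro q hqm
      rw [mem_sdiff, hM₁, hM₂, mem_filter, mem_filter] at hqm
      obtain ⟨⟨-, hq1'⟩, hq2'⟩ := hqm
      have hq2'' : (q.1,q.2,c) ∉ E₁ := fun h => hq2' ⟨mem_univ _, h⟩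
      rw [mem_sdiff, hN₁, hN₂, mem_filter, mem_filter]
      exact ⟨⟨mem_univ _, hCs q hq1' hq2''⟩, fun h => hD q hq1' hq2'' h.2⟩
    have hpM : ((a,b) : A × B) ∈ M₁ \ M₂ := by
      rw [mem_sdiff, hM₁, hM₂, mem_filter, mem_filter]
      exact ⟨⟨mem_univ _, hc1⟩, fun h => hc2 h.2⟩
    have hpN : ((a,b) : A × B) ∈ N₂ \ N₁ := by
      rw [mem_sdiff, hN₁, hN₂, mem_filter, mem_filter]
      exact ⟨⟨mem_univ _, hc'2⟩, fun h => hc'1 h.2⟩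
    have hpN' : ((a,b) : A × B) ∉ N₁ \ N₂ := by
      rw [mem_sdiff, hN₁, mem_filter]
      exact fun h => hc'1 h.1.2
    have hpM' : ((a,b) : A × B) ∉ M₂ \ M₁ := by
      rw [mem_sdiff, hM₁, hM₂, mem_filter, mem_filter]
      exact fun h => h.2 ⟨mem_univ _, hc1⟩
    have lt1 : (N₁ \ N₂).card < (M₁ \ M₂).card :=
      card_lt_of_subset_of_mem hNM hpM hpN'
    have lt2 : (M₂ \ M₁).card < (N₂ \ N₁).card :=
      card_lt_of_subset_of_mem hMN hpN hpM'
    have eqN : (N₁ \ N₂).card = (N₂ \ N₁).card :=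
      Finset.card_sdiff_comm (by rw [hN₁, hN₂, colSet_card, colSet_card, hC])
    have eqM : (M₁ \ M₂).card = (M₂ \ M₁).card :=
      Finset.card_sdiff_comm (by rw [hM₁, hM₂, colSet_card, colSet_card, hC])
    omega

/-- if `H₁` and `H₂` are `B`-balanced realizations of the same degree
sequence `D = (D_A, D_B, D_C)` with the same `(A,B)`-projection, then `H₁` can be
transformed into `H₂` by a finite series of switches acting on the `C`-coordinates. -/
theorem same_projection_switchC_connected
    (dA : A → ℕ) (dB : B → ℕ) (dC : C → ℕ)
    (H₁ H₂ : Finset (A × B × C))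
    (hH₁A : ∀ a, hDegA H₁ a = dA a) (hH₁B : ∀ b, hDegB H₁ b = dB b)
    (hH₁C : ∀ c, hDegC H₁ c = dC c)
    (hH₂A : ∀ a, hDegA H₂ a = dA a) (hH₂B : ∀ b, hDegB H₂ b = dB b)
    (hH₂C : ∀ c, hDegC H₂ c = dC c)
    (hbal₁ : BBalanced H₁) (hbal₂ : BBalanced H₂)
    (hproj : ∀ a b, projAB H₁ a b = projAB H₂ a b) :
    Relation.ReflTransGen IsSwitchC H₁ H₂ := by
  exact key_lemma _ H₁ H₂ le_rfl hproj (fun c => by rw [hH₁C, hH₂C])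
end

section
/- Let M₁ and M₂ be the adjacency matrices of two B-balanced (A,B)-projections of two partite 3-uniform hypergraphs H₁ and H₂ realizing the same degree sequence D = (D_A, D_B, D_C), and let G₁ and G₂ be their traces. Then G₁ and G₂ are bipartite simple graphs with the same degree sequences: for each column (vertex b ∈ B), the number of 1s in that column of the trace is the same in G₁ and G₂, and for each row (vertex a ∈ A), the number of 1s in that row of the trace is the same in G₁ and G₂. -/
open Finset

variable {A B C : Type*} [Fintype A] [Fintype B] [Fintype C]
  [DecidableEq A] [DecidableEq B] [DecidableEq C]

/-- The entry of the trace at `(a,b)`: it is `1` iff the adjacency-matrix entry of the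
`(A,B)`-projection at `(a,b)` equals the column ceiling `l b = ⌈d(b)/|A|⌉`. -/
def traceEntry (E : Finset (A × B × C)) (l : B → ℕ) (a : A) (b : B) : ℕ :=
  if projAB E a b = l b then 1 else 0

/-!
In a column whose entries are `l` or `l - 1`, `l` is forced to be the ceiling of the column
average `d(b)/|A|`, so the trace entry equals `m_ab + 1 - l` over `ℤ`. Summing, the row and
column sums of the trace depend only on the degrees and the ceilings, which the two
hypergraphs share.
-/

omit [Fintype B] [Fintype C] [DecidableEq C] in
theorem sum_projAB_left (E : Finset (A × B × C)) (b : B) :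
    ∑ a : A, projAB E a b = hDegB E b := by
  rw [hDegB, card_eq_sum_card_fiberwise (f := fun e => e.1) (t := univ) (fun _ _ => mem_univ _)]
  refine sum_congr rfl fun a _ => ?_
  rw [projAB, filter_filter]
  simp only [and_comm]

omit [Fintype A] [Fintype C] [DecidableEq C] in
theorem sum_projAB_right (E : Finset (A × B × C)) (a : A) :
    ∑ b : B, projAB E a b = hDegA E a := by
  rw [hDegA, card_eq_sum_card_fiberwise (f := fun e => e.2.1) (t := univ) (fun _ _ => mem_univ _)]
  exact sum_congr rfl fun b _ => by rw [projAB, filter_filter]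

/-- The ceiling of the average is `m` unless `f` is constant. -/
theorem eq_or_succ_eq_ceil_avg {ι : Type*} [Fintype ι] (f : ι → ℕ) (m : ℕ)
    (hf : ∀ i, f i = m ∨ f i + 1 = m) (i : ι) :
    f i = (∑ j, f j + Fintype.card ι - 1) / Fintype.card ι ∨
      f i + 1 = (∑ j, f j + Fintype.card ι - 1) / Fintype.card ι := by
  have hn : 0 < Fintype.card ι := Fintype.card_pos_iff.mpr ⟨i⟩
  by_cases htop : ∃ j, f j = m
  · obtain ⟨j, hj⟩ := htop
    have hlt : Fintype.card ι * m < ∑ j, f j + Fintype.card ι := by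
      calc Fintype.card ι * m = ∑ _k : ι, m := by simp
        _ < ∑ k, (f k + 1) :=
          sum_lt_sum (fun k _ => by rcases hf k with h | h <;> omega) ⟨j, mem_univ _, by omega⟩
        _ = ∑ k, f k + Fintype.card ι := by simp [sum_add_distrib]
    have hle : ∑ k, f k ≤ Fintype.card ι * m := by
      calc ∑ k, f k ≤ ∑ _k : ι, m := sum_le_sum fun k _ => by rcases hf k with h | h <;> omega
        _ = Fintype.card ι * m := by simp
    rw [Nat.div_eq_of_lt_le (k := m) (by rw [mul_comm]; omega) (by rw [add_mul, mul_comm]; omega)]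
    exact hf i
  · have hbot : ∀ k, f k + 1 = m := fun k => (hf k).resolve_left fun h => htop ⟨k, h⟩
    have hconst : ∑ k, f k = Fintype.card ι * f i := by
      rw [← smul_eq_mul, ← card_univ, ← sum_const]
      exact sum_congr rfl fun k _ => by have := hbot k; have := hbot i; omega
    left
    rw [hconst, Nat.div_eq_of_lt_le (k := f i) (by rw [mul_comm]; omega)
      (by rw [add_mul, mul_comm]; omega)]

omit [Fintype B] [Fintype C] [DecidableEq C] in
theorem BBalanced.projAB_eq_or_succ_eq_ceil {E : Finset (A × B × C)} (hE : BBalanced E)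
    (a : A) (b : B) :
    projAB E a b = (hDegB E b + Fintype.card A - 1) / Fintype.card A ∨
      projAB E a b + 1 = (hDegB E b + Fintype.card A - 1) / Fintype.card A := by
  obtain ⟨m, hm⟩ := hE b
  rw [← sum_projAB_left]
  exact eq_or_succ_eq_ceil_avg (fun a => projAB E a b) m hm a

omit [Fintype A] [Fintype B] [Fintype C] [DecidableEq C] in
theorem traceEntry_eq_of_eq_or_succ_eq {E : Finset (A × B × C)} {l : B → ℕ} {a : A} {b : B}
    (h : projAB E a b = l b ∨ projAB E a b + 1 = l b) :
    (traceEntry E l a b : ℤ) = projAB E a b + 1 - l b := by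
  unfold traceEntry
  rcases h with h | h
  · simp [h]
  · rw [if_neg (by omega)]
    omega

section TraceDegrees

variable {E : Finset (A × B × C)} {l : B → ℕ}
  (hl : ∀ a b, projAB E a b = l b ∨ projAB E a b + 1 = l b)
include hl

omit [Fintype B] [Fintype C] [DecidableEq C] in
theorem sum_traceEntry_left (b : B) :
    ((∑ a : A, traceEntry E l a b : ℕ) : ℤ) =
      hDegB E b + Fintype.card A - Fintype.card A * l b := by
  push_cast
  simp only [traceEntry_eq_of_eq_or_succ_eq (hl _ _), sum_sub_distrib, sum_add_distrib,
    ← Nat.cast_sum, sum_projAB_left]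
  simp

omit [Fintype A] [Fintype C] [DecidableEq C] in
theorem sum_traceEntry_right (a : A) :
    ((∑ b : B, traceEntry E l a b : ℕ) : ℤ) = hDegA E a + Fintype.card B - ∑ b, (l b : ℤ) := by
  push_cast
  simp only [traceEntry_eq_of_eq_or_succ_eq (hl _ _), sum_sub_distrib, sum_add_distrib,
    ← Nat.cast_sum, sum_projAB_right]
  simp

end TraceDegrees

theorem traces_same_degree_sequence_general
    (dA : A → ℕ) (dB : B → ℕ)
    (H₁ H₂ : Finset (A × B × C))
    (hH₁A : ∀ a, hDegA H₁ a = dA a) (hH₁B : ∀ b, hDegB H₁ b = dB b)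
    (hH₂A : ∀ a, hDegA H₂ a = dA a) (hH₂B : ∀ b, hDegB H₂ b = dB b)
    (hbal₁ : BBalanced H₁) (hbal₂ : BBalanced H₂)
    (l : B → ℕ)
    (hl : ∀ b, l b = (dB b + Fintype.card A - 1) / Fintype.card A) :
    (∀ b : B, ∑ a : A, traceEntry H₁ l a b = ∑ a : A, traceEntry H₂ l a b) ∧
    (∀ a : A, ∑ b : B, traceEntry H₁ l a b = ∑ b : B, traceEntry H₂ l a b) := by
  have hceil : ∀ H : Finset (A × B × C), BBalanced H → (∀ b, hDegB H b = dB b) →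
      ∀ a b, projAB H a b = l b ∨ projAB H a b + 1 = l b := fun H hbal hB a b => by
    rw [hl, ← hB]
    exact hbal.projAB_eq_or_succ_eq_ceil a b
  have hl₁ := hceil H₁ hbal₁ hH₁B
  have hl₂ := hceil H₂ hbal₂ hH₂B
  refine ⟨fun b => ?_, fun a => ?_⟩
  · exact Nat.cast_injective (R := ℤ)
      (by rw [sum_traceEntry_left hl₁, sum_traceEntry_left hl₂, hH₁B, hH₂B])
  · exact Nat.cast_injective (R := ℤ)
      (by rw [sum_traceEntry_right hl₁, sum_traceEntry_right hl₂, hH₁A, hH₂A])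

/-- if `H₁`, `H₂` are partite 3-uniform hypergraphs realizing the same
degree sequence `D = (D_A, D_B, D_C)` whose `(A,B)`-projections are `B`-balanced, then
the traces `G₁`, `G₂` of these projections (with column ceilings `l b = ⌈d(b)/|A|⌉`)
have the same degree sequences: every column has the same number of `1`s in both
traces, and every row has the same number of `1`s in both traces. -/
theorem traces_same_degree_sequence [Nonempty A]
    (dA : A → ℕ) (dB : B → ℕ) (dC : C → ℕ)
    (H₁ H₂ : Finset (A × B × C))
    (hH₁A : ∀ a, hDegA H₁ a = dA a) (hH₁B : ∀ b, hDegB H₁ b = dB b)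
    (hH₁C : ∀ c, hDegC H₁ c = dC c)
    (hH₂A : ∀ a, hDegA H₂ a = dA a) (hH₂B : ∀ b, hDegB H₂ b = dB b)
    (hH₂C : ∀ c, hDegC H₂ c = dC c)
    (hbal₁ : BBalanced H₁) (hbal₂ : BBalanced H₂)
    (l : B → ℕ)
    (hl : ∀ b, l b = (dB b + Fintype.card A - 1) / Fintype.card A) :
    (∀ b : B, ∑ a : A, traceEntry H₁ l a b = ∑ a : A, traceEntry H₂ l a b) ∧
    (∀ a : A, ∑ b : B, traceEntry H₁ l a b = ∑ b : B, traceEntry H₂ l a b) :=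
  traces_same_degree_sequence_general dA dB H₁ H₂ hH₁A hH₁B hH₂A hH₂B hbal₁ hbal₂ l hl
end
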